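/- arXiv:2403.15818 — 6 statements merged into one kernel-verified Lean document; each statement's English description precedes it below -/
import Mathlib

section
/- Let p, q be coprime positive integers with q ≥ 9 and set ω = 2πp/q. Let A > 0 and β ≠ 0 be real constants and let η₁, η₂ ∈ ℝ be such that η₁ − η₂ is not an integer multiple of π. Then there exists r ∈ {0, 1, …, q−1} such that every k ∈ ℕ with k ≡ r (mod q) satisfies: β·sin(kω + η₂) > 0, sin(kω + η₁) ≠ 0, and β·A·sin(kω + η₁)/sin(kω + η₂) ∉ {1, −1}. -/
/-!
The angles `k ω` with `k ≡ r (mod q)` all equal `2πc/q` modulo `2π` for one integer `c`,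
and since `p` is invertible modulo `q` every `c` is reached by some residue `r`. As `q ≥ 9`,
some four consecutive angles `2πc/q`, `c ∈ (m, m + 4]`, keep `β sin(2πc/q + η₂)` positive.
Each of the three bad equations `β A sin(x + η₁) + v sin(x + η₂) = 0`, `v ∈ {0, 1, -1}`, is
a nontrivial combination of `sin x` and `cos x` because `η₁ - η₂ ∉ πℤ`, so any two of its
solutions differ by a multiple of `π`. Four consecutive angles differ by less than `π`, so
each bad equation holds at most at one of them, and one of them is good.
-/

open Real Finset

theorem Finset.exists_forall_not_of_card_lt {α ι : Type*} (s : Finset α) (t : Finset ι)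
    (P : ι → α → Prop) (hP : ∀ i ∈ t, ∀ x ∈ s, ∀ y ∈ s, P i x → P i y → x = y)
    (hts : #t < #s) : ∃ x ∈ s, ∀ i ∈ t, ¬ P i x := by
  classical
  by_contra! h
  have hcover : s ⊆ t.biUnion fun i => s.filter (P i) := fun x hx => by
    obtain ⟨i, hi, hPx⟩ := h x hx
    exact mem_biUnion.mpr ⟨i, hi, mem_filter.mpr ⟨hx, hPx⟩⟩
  have hsmall : ∀ i ∈ t, #(s.filter (P i)) ≤ 1 := fun i hi =>
    card_le_one.mpr fun x hx y hy =>
      hP i hi x (mem_filter.mp hx).1 y (mem_filter.mp hy).1 (mem_filter.mp hx).2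
        (mem_filter.mp hy).2
  have := (card_le_card hcover).trans (card_biUnion_le_card_mul t _ 1 hsmall)
  omega

namespace Real

theorem sin_add_mul_sin_add_sub_sin_add_mul_sin_add (x y a b : ℝ) :
    sin (y + a) * sin (x + b) - sin (y + b) * sin (x + a) = sin (x - y) * sin (a - b) := by
  simp only [sin_add, sin_sub]
  ring

/-- The system `u sin (· + η₁) + v sin (· + η₂) = 0` at `x` and `y` has the nonzero solution
`(u, v)`, so its determinant `sin (x - y) sin (η₁ - η₂)` vanishes. -/
theorem sin_sub_eq_zero_of_mul_sin_add_add_mul_sin_add_eq_zero {u v η₁ η₂ x y : ℝ}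
    (hu : u ≠ 0) (hη : sin (η₁ - η₂) ≠ 0)
    (hx : u * sin (x + η₁) + v * sin (x + η₂) = 0)
    (hy : u * sin (y + η₁) + v * sin (y + η₂) = 0) : sin (x - y) = 0 := by
  have h : u * (sin (x - y) * sin (η₁ - η₂)) = 0 := by
    rw [← sin_add_mul_sin_add_sub_sin_add_mul_sin_add]
    linear_combination sin (x + η₂) * hy - sin (y + η₂) * hx
  simpa [hu, hη] using h

theorem eq_of_sin_two_pi_mul_div_sub_eq_zero {x y q : ℝ} (hxy : 2 * |x - y| < q)
    (h : sin (2 * π * x / q - 2 * π * y / q) = 0) : x = y := by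
  have hq : 0 < q := by linarith [abs_nonneg (x - y)]
  rw [← sub_div, ← mul_sub] at h
  have habs : |2 * π * (x - y) / q| < π := by
    rw [abs_div, abs_mul, abs_of_pos (by positivity : (0 : ℝ) < 2 * π), abs_of_pos hq,
      div_lt_iff₀ hq]
    nlinarith [pi_pos]
  obtain ⟨hlo, hhi⟩ := abs_lt.mp habs
  have := (sin_eq_zero_iff_of_lt_of_lt hlo hhi).mp h
  simpa [pi_ne_zero, hq.ne', sub_eq_zero] using this

theorem eq_of_mem_Ioc_of_sin_two_pi_mul_div_sub_eq_zero {q : ℝ} {L : ℕ} (hL : 2 * L < q)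
    {m c c' : ℤ} (hc : c ∈ Ioc m (m + L)) (hc' : c' ∈ Ioc m (m + L))
    (h : sin (2 * π * c / q - 2 * π * c' / q) = 0) : c = c' := by
  rw [mem_Ioc] at hc hc'
  have hcc' : |c - c'| < L := abs_sub_lt_iff.mpr ⟨by omega, by omega⟩
  have hcc'' : |(c : ℝ) - c'| < L := by
    rw [← Int.cast_sub, ← Int.cast_abs]
    exact_mod_cast hcc'
  exact_mod_cast eq_of_sin_two_pi_mul_div_sub_eq_zero (by linarith) h

theorem exists_forall_sin_two_pi_mul_div_add_pos {q : ℝ} {L : ℕ} (hL : 2 * L < q) (η : ℝ) :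
    ∃ m : ℤ, ∀ c ∈ Ioc m (m + L), 0 < sin (2 * π * c / q + η) := by
  have hq : 0 < q := by linarith [(Nat.cast_nonneg L : (0 : ℝ) ≤ L)]
  set T := -η * q / (2 * π)
  refine ⟨⌊T⌋, fun c hc => ?_⟩
  obtain ⟨hlo, hhi⟩ := mem_Ioc.mp hc
  have hlo' : T < c := Int.floor_lt.mp hlo
  have hhi' : (c : ℝ) ≤ T + L := by
    have : (c : ℝ) ≤ ⌊T⌋ + L := by exact_mod_cast hhi
    linarith [Int.floor_le T]
  -- `0 < c - T ≤ L < q / 2` puts the angle in `(0, π)`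
  have hangle : 2 * π * c / q + η = 2 * π * (c - T) / q := by
    simp only [T]
    field_simp
    ring
  rw [hangle]
  apply sin_pos_of_pos_of_lt_pi
  · have : 0 < (c : ℝ) - T := by linarith
    positivity
  · rw [div_lt_iff₀ hq]
    nlinarith [pi_pos]

theorem exists_forall_mul_sin_two_pi_mul_div_add_pos {q β : ℝ} {L : ℕ} (hL : 2 * L < q)
    (hβ : β ≠ 0) (η : ℝ) :
    ∃ m : ℤ, ∀ c ∈ Ioc m (m + L), 0 < β * sin (2 * π * c / q + η) := by
  rcases hβ.lt_or_gt with hneg | hpos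
  · obtain ⟨m, hm⟩ := exists_forall_sin_two_pi_mul_div_add_pos hL (η + π)
    refine ⟨m, fun c hc => ?_⟩
    have := hm c hc
    rw [← add_assoc, sin_add_pi] at this
    nlinarith
  · obtain ⟨m, hm⟩ := exists_forall_sin_two_pi_mul_div_add_pos hL η
    exact ⟨m, fun c hc => mul_pos hpos (hm c hc)⟩

theorem sin_two_pi_mul_div_add_eq_of_intCast_eq {q : ℕ} {a b : ℤ} (hab : (a : ZMod q) = b)
    (η : ℝ) : sin (2 * π * a / q + η) = sin (2 * π * b / q + η) := by
  obtain ⟨d, hd⟩ := (ZMod.intCast_eq_intCast_iff_dvd_sub a b q).mp hab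
  rcases eq_or_ne q 0 with rfl | hq
  · simp
  have : 2 * π * a / q + η = 2 * π * b / q + η + (-d : ℤ) * (2 * π) := by
    have hd' : (b : ℝ) - a = q * d := by exact_mod_cast hd
    field_simp
    push_cast
    linear_combination -2 * π * hd'
  rw [this, sin_add_int_mul_two_pi]

end Real

theorem ZMod.exists_lt_forall_mod_eq_imp_mul_eq {p q : ℕ} [NeZero q] (hco : p.Coprime q)
    (c : ℤ) : ∃ r < q, ∀ k : ℕ, k % q = r → (((k * p : ℕ) : ℤ) : ZMod q) = c := by
  let u := ZMod.unitOfCoprime p hco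
  refine ⟨((c : ZMod q) * ↑u⁻¹).val, ZMod.val_lt _, fun k hk => ?_⟩
  have hkr : (k : ZMod q) = (c : ZMod q) * ↑u⁻¹ := by
    rw [← ZMod.natCast_mod, hk, ZMod.natCast_zmod_val]
  push_cast
  rw [hkr, mul_assoc, show ((p : ZMod q)) = u from rfl, Units.inv_mul, mul_one]

theorem stmt2_general (p q : ℕ) (hq : 9 ≤ q) (hco : Nat.Coprime p q)
    (A β η₁ η₂ : ℝ) (hA : 0 < A) (hβ : β ≠ 0)
    (hη : ∀ n : ℤ, η₁ - η₂ ≠ n * π) :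
    ∃ r : ℕ, r < q ∧ ∀ k : ℕ, k % q = r →
      0 < β * sin (k * (2 * π * p / q) + η₂) ∧
      sin (k * (2 * π * p / q) + η₁) ≠ 0 ∧
      β * A * sin (k * (2 * π * p / q) + η₁) / sin (k * (2 * π * p / q) + η₂) ≠ 1 ∧
      β * A * sin (k * (2 * π * p / q) + η₁) / sin (k * (2 * π * p / q) + η₂) ≠ -1 := by
  have : NeZero q := ⟨by omega⟩
  have hL : 2 * ((4 : ℕ) : ℝ) < q := by
    have : (9 : ℝ) ≤ q := by exact_mod_cast hq
    push_cast
    linarith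
  have hη' : sin (η₁ - η₂) ≠ 0 := fun h => by
    obtain ⟨n, hn⟩ := sin_eq_zero_iff.mp h
    exact hη n hn.symm
  obtain ⟨m, hpos⟩ := exists_forall_mul_sin_two_pi_mul_div_add_pos hL hβ η₂
  obtain ⟨c, hc, hgood⟩ := exists_forall_not_of_card_lt (Ioc m (m + (4 : ℕ))) {0, 1, -1}
    (fun v c => β * A * sin (2 * π * c / q + η₁) + v * sin (2 * π * c / q + η₂) = 0)
    (fun _ _ c hc c' hc' h h' => eq_of_mem_Ioc_of_sin_two_pi_mul_div_sub_eq_zero hL hc hc'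
      (sin_sub_eq_zero_of_mul_sin_add_add_mul_sin_add_eq_zero (mul_ne_zero hβ hA.ne') hη' h h'))
    (by simp only [Int.card_Ioc]; exact card_le_three.trans_lt (by norm_num))
  obtain ⟨r, hr, hmod⟩ := ZMod.exists_lt_forall_mod_eq_imp_mul_eq hco c
  refine ⟨r, hr, fun k hk => ?_⟩
  have hangle : ∀ η, sin (k * (2 * π * p / q) + η) = sin (2 * π * c / q + η) := fun η => by
    rw [← sin_two_pi_mul_div_add_eq_of_intCast_eq (hmod k hk)]
    push_cast
    ring_nf
  simp only [hangle]
  have hs₂ : sin (2 * π * c / q + η₂) ≠ 0 := fun h => by simpa [h] using hpos c hc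
  refine ⟨hpos c hc, fun h => hgood 0 (by simp) (by simp [h]), fun h => ?_, fun h => ?_⟩
  · rw [div_eq_iff hs₂] at h
    exact hgood (-1) (by simp) (by linear_combination h)
  · rw [div_eq_iff hs₂] at h
    exact hgood 1 (by simp) (by linear_combination h)

/-- Let `p, q` be coprime positive integers with `q ≥ 9` and `ω = 2πp/q`. Let `A > 0`,
`β ≠ 0`, and `η₁ − η₂` not an integer multiple of `π`. Then there exists
`r ∈ {0, …, q−1}` such that every `k ∈ ℕ` with `k ≡ r (mod q)` satisfies:
`β·sin(kω + η₂) > 0`, `sin(kω + η₁) ≠ 0`, and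
`β·A·sin(kω + η₁)/sin(kω + η₂) ∉ {1, −1}`. -/
theorem stmt2 (p q : ℕ) (hp : 0 < p) (hq : 9 ≤ q) (hco : Nat.Coprime p q)
    (A β η₁ η₂ : ℝ) (hA : 0 < A) (hβ : β ≠ 0)
    (hη : ∀ n : ℤ, η₁ - η₂ ≠ n * π) :
    ∃ r : ℕ, r < q ∧ ∀ k : ℕ, k % q = r →
      0 < β * sin (k * (2 * π * p / q) + η₂) ∧
      sin (k * (2 * π * p / q) + η₁) ≠ 0 ∧
      β * A * sin (k * (2 * π * p / q) + η₁) / sin (k * (2 * π * p / q) + η₂) ≠ 1 ∧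
      β * A * sin (k * (2 * π * p / q) + η₁) / sin (k * (2 * π * p / q) + η₂) ≠ -1 :=
  stmt2_general p q hq hco A β η₁ η₂ hA hβ hη
end

section
/- Let s*, w* ∈ ℝ satisfy: cos(2πw* + η₃) + b·sin(2πw* + η₃) ≠ 0, sin(2πs* + η₂) ≠ 0, ξ(2πw*)·B(2πw*)·sin(2πs* + η₂) > 0, and |ξ(2πw*)·(A*/B*)·sin(2πs* + η₁)/sin(2πs* + η₂)| ∉ {0, 1}. Suppose (tₙ, sₙ, wₙ) is a sequence in ℝ³ such that every point of the horizontal line {(t, s*, w*) : t ∈ ℝ} is an accumulation point modulo ℤ of the sequence. Then there exist a strictly increasing function φ : ℕ → ℕ, a number ε > 0, and constants 0 < C₁ ≤ C₂ with either C₂ < 1 or C₁ > 1, such that the set { h(t_{φ(n)}, s_{φ(n)}, w_{φ(n)}) : n ∈ ℕ } is dense in the interval (−ε, ε) and C₁ ≤ |g(t_{φ(n)}, s_{φ(n)}, w_{φ(n)})| ≤ C₂ for all n ∈ ℕ. -/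
set_option maxHeartbeats 4000000


open Real

/-- The denominator `E(x) = cos(x+η₃) + b·sin(x+η₃)`. -/
noncomputable def Efun (b η₃ x : ℝ) : ℝ := cos (x + η₃) + b * sin (x + η₃)

/-- `A(x) = A*/(cos(x+η₃) + b·sin(x+η₃))`. -/
noncomputable def Afun (Astar b η₃ x : ℝ) : ℝ := Astar / Efun b η₃ x

/-- `B(x) = B*/(cos(x+η₃) + b·sin(x+η₃))`. -/
noncomputable def Bfun (Bstar b η₃ x : ℝ) : ℝ := Bstar / Efun b η₃ x

/-- `ξ(x) = (cos(x+η₃)·u₁ + sin(x+η₃)·u₂)/(cos(x+η₃) + b·sin(x+η₃))`. -/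
noncomputable def xifun (u₁ u₂ b η₃ x : ℝ) : ℝ :=
  (cos (x + η₃) * u₁ + sin (x + η₃) * u₂) / Efun b η₃ x

/-- `g(t,s,w) = γ^t·A(2πw)·sin(2πs + η₁)`. -/
noncomputable def gfun (γ Astar b η₁ η₃ : ℝ) (t s w : ℝ) : ℝ :=
  γ ^ t * Afun Astar b η₃ (2 * π * w) * sin (2 * π * s + η₁)

/-- `h(t,s,w) = γ^t·B(2πw)·sin(2πs + η₂) − ξ(2πw)`. -/
noncomputable def hfun (γ Bstar u₁ u₂ b η₂ η₃ : ℝ) (t s w : ℝ) : ℝ :=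
  γ ^ t * Bfun Bstar b η₃ (2 * π * w) * sin (2 * π * s + η₂) - xifun u₁ u₂ b η₃ (2 * π * w)

/-- `(t,s,w)` is an accumulation point modulo `ℤ` (in the last two coordinates) of the
sequence `z`. -/
def AccumModZ (z : ℕ → ℝ × ℝ × ℝ) (p : ℝ × ℝ × ℝ) : Prop :=
  ∀ ε > 0, {n : ℕ | ∃ i j : ℤ,
    |(z n).1 - p.1| < ε ∧ |(z n).2.1 - p.2.1 - (i : ℝ)| < ε ∧
      |(z n).2.2 - p.2.2 - (j : ℝ)| < ε}.Infinite

lemma sin_per' (y c : ℝ) (i : ℤ) : sin (2 * π * (y + i) + c) = sin (2 * π * y + c) := by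
  have h : 2 * π * (y + i) + c = (2 * π * y + c) + i * (2 * π) := by ring
  rw [h, Real.sin_add_int_mul_two_pi]

lemma cos_per' (y c : ℝ) (i : ℤ) : cos (2 * π * (y + i) + c) = cos (2 * π * y + c) := by
  have h : 2 * π * (y + i) + c = (2 * π * y + c) + i * (2 * π) := by ring
  rw [h, Real.cos_add_int_mul_two_pi]

lemma Efun_per (b η₃ y : ℝ) (i : ℤ) : Efun b η₃ (2 * π * (y + i)) = Efun b η₃ (2 * π * y) := by
  unfold Efun; rw [sin_per', cos_per']

lemma hfun_per (γ Bstar u₁ u₂ b η₂ η₃ t s w : ℝ) (i j : ℤ) :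
    hfun γ Bstar u₁ u₂ b η₂ η₃ t (s + i) (w + j) = hfun γ Bstar u₁ u₂ b η₂ η₃ t s w := by
  unfold hfun Bfun xifun
  rw [sin_per' s η₂ i, Efun_per, cos_per' w η₃ j, sin_per' w η₃ j]

lemma gfun_per (γ Astar b η₁ η₃ t s w : ℝ) (i j : ℤ) :
    gfun γ Astar b η₁ η₃ t (s + i) (w + j) = gfun γ Astar b η₁ η₃ t s w := by
  unfold gfun Afun
  rw [sin_per' s η₁ i, Efun_per]

/-- Case 1 of Lemma 5.2: if a sequence accumulates (mod ℤ) on a proper horizontal line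
`{(t, s*, w*)}`, then along a subsequence `h` is dense near zero and `|g|` stays in a
closed interval either inside `(0,1)` or inside `(1,∞)`. -/
theorem stmt7 (γ Astar Bstar b u₁ u₂ η₁ η₂ η₃ : ℝ)
    (hγ : 1 < γ) (hA : 0 < Astar) (hB : 0 < Bstar)
    (hu : (u₁, u₂) ≠ (0, 0))
    (hη : ∀ n : ℤ, η₁ - η₂ ≠ (n : ℝ) * π)
    (sstar wstar : ℝ)
    (hE : Efun b η₃ (2 * π * wstar) ≠ 0)
    (hs : sin (2 * π * sstar + η₂) ≠ 0)
    (hpos : 0 < xifun u₁ u₂ b η₃ (2 * π * wstar) * Bfun Bstar b η₃ (2 * π * wstar) *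
      sin (2 * π * sstar + η₂))
    (hne0 : |xifun u₁ u₂ b η₃ (2 * π * wstar) * (Astar / Bstar) *
      sin (2 * π * sstar + η₁) / sin (2 * π * sstar + η₂)| ≠ 0)
    (hne1 : |xifun u₁ u₂ b η₃ (2 * π * wstar) * (Astar / Bstar) *
      sin (2 * π * sstar + η₁) / sin (2 * π * sstar + η₂)| ≠ 1)
    (z : ℕ → ℝ × ℝ × ℝ)
    (hacc : ∀ t : ℝ, AccumModZ z (t, sstar, wstar)) :
    ∃ φ : ℕ → ℕ, StrictMono φ ∧ ∃ ε : ℝ, 0 < ε ∧ ∃ C₁ C₂ : ℝ,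
      0 < C₁ ∧ C₁ ≤ C₂ ∧ (C₂ < 1 ∨ 1 < C₁) ∧
      Set.Ioo (-ε) ε ⊆ closure {y : ℝ | ∃ n : ℕ,
        y = hfun γ Bstar u₁ u₂ b η₂ η₃ (z (φ n)).1 (z (φ n)).2.1 (z (φ n)).2.2} ∧
      ∀ n : ℕ,
        C₁ ≤ |gfun γ Astar b η₁ η₃ (z (φ n)).1 (z (φ n)).2.1 (z (φ n)).2.2| ∧
        |gfun γ Astar b η₁ η₃ (z (φ n)).1 (z (φ n)).2.1 (z (φ n)).2.2| ≤ C₂ := by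
  have hγ0 : (0:ℝ) < γ := by linarith
  have hγ1 : γ ≠ 1 := ne_of_gt hγ
  set X : ℝ := xifun u₁ u₂ b η₃ (2 * π * wstar) with hXdef
  set Bv : ℝ := Bfun Bstar b η₃ (2 * π * wstar) with hBvdef
  set S₁ : ℝ := sin (2 * π * sstar + η₁) with hS₁def
  set S₂ : ℝ := sin (2 * π * sstar + η₂) with hS₂def
  set M : ℝ := |Astar / Bstar * (S₁ / S₂)| with hMdef
  set K : ℝ := |X * (Astar / Bstar) * S₁ / S₂| with hKdef
  have hKM : K = |X| * M := by
    rw [hKdef, hMdef, ← abs_mul]; ring_nf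
  have hM0 : 0 ≤ M := abs_nonneg _
  have hK0 : 0 < K := lt_of_le_of_ne (abs_nonneg _) (Ne.symm hne0)
  have hX0 : X ≠ 0 := by
    intro h; apply hne0; rw [hKdef, h]; simp
  have hXpos : 0 < |X| := abs_pos.mpr hX0
  have hBv0 : Bv ≠ 0 := by
    intro h; rw [h] at hpos; simp at hpos
  have hP0 : Bv * S₂ ≠ 0 := mul_ne_zero hBv0 hs
  have hXP : 0 < X * (Bv * S₂) := by
    have h : X * (Bv * S₂) = X * Bv * S₂ := by ring
    rw [h]; exact hpos
  -- constants
  set r : ℝ := min (1/4) (|K - 1| / (4 * K)) with hrdef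
  have hK1' : |K - 1| > 0 := abs_pos.mpr (sub_ne_zero.mpr hne1)
  have hr0 : 0 < r := lt_min (by norm_num) (div_pos hK1' (by linarith))
  have hr14 : r ≤ 1/4 := min_le_left _ _
  have hrK : r ≤ |K - 1| / (4 * K) := min_le_right _ _
  set ε : ℝ := r * |X| with hεdef
  have hε0 : 0 < ε := mul_pos hr0 hXpos
  set C₁ : ℝ := K * (1 - 2*r) with hC₁def
  set C₂ : ℝ := K * (1 + 2*r) with hC₂def
  have hC₁0 : 0 < C₁ := by
    apply mul_pos hK0; linarith
  have hC₁₂ : C₁ ≤ C₂ := by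
    rw [hC₁def, hC₂def]
    exact mul_le_mul_of_nonneg_left (by linarith) (le_of_lt hK0)
  have halt : C₂ < 1 ∨ 1 < C₁ := by
    have h4K : (0:ℝ) < 4 * K := by linarith
    have hf : r * (4 * K) ≤ |K - 1| := (le_div_iff₀ h4K).mp hrK
    rcases lt_or_gt_of_ne hne1 with h | h
    · left
      have habs : |K - 1| = 1 - K := by rw [abs_of_neg (by linarith : K - 1 < 0)]; ring
      rw [habs] at hf
      rw [hC₂def]
      have hKr : 4 * (r * K) ≤ 1 - K := by linarith [hf]
      have he : K * (1 + 2 * r) = K + 2 * (r * K) := by ring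
      linarith
    · right
      have habs : |K - 1| = K - 1 := abs_of_pos (by linarith)
      rw [habs] at hf
      rw [hC₁def]
      have hKr : 4 * (r * K) ≤ K - 1 := by linarith [hf]
      have he : K * (1 - 2 * r) = K - 2 * (r * K) := by ring
      linarith
  -- the key quantitative lemma
  have key : ∀ v : ℝ, |v| < ε → ∀ δ : ℝ, 0 < δ → ∀ N : ℕ, ∃ n : ℕ, N ≤ n ∧
      |hfun γ Bstar u₁ u₂ b η₂ η₃ (z n).1 (z n).2.1 (z n).2.2 - v| < δ ∧
      C₁ ≤ |gfun γ Astar b η₁ η₃ (z n).1 (z n).2.1 (z n).2.2| ∧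
      |gfun γ Astar b η₁ η₃ (z n).1 (z n).2.1 (z n).2.2| ≤ C₂ := by
    intro v hv δ hδ N
    have hvX : |v| < |X| := by
      refine lt_of_lt_of_le hv ?_
      have h := mul_le_mul_of_nonneg_right hr14 (le_of_lt hXpos)
      rw [hεdef]; linarith
    -- the solving time tv
    set P : ℝ := Bv * S₂ with hPdef
    have hPne : P ≠ 0 := hP0
    have hPabs : (0:ℝ) < |P| := abs_pos.mpr hPne
    have hvXP : 0 < (v + X) * P := by
      have h1 : |v| * |P| < |X| * |P| := mul_lt_mul_of_pos_right hvX hPabs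
      have h2 : |X| * |P| = X * P := by rw [← abs_mul]; exact abs_of_pos hXP
      have h3 := neg_abs_le (v * P)
      have h4 : |v * P| = |v| * |P| := abs_mul v P
      have h5 : (v + X) * P = v * P + X * P := by ring
      rw [h5]; linarith
    have hPP : 0 < P * P := by
      rcases hPne.lt_or_gt with h | h
      · exact mul_pos_of_neg_of_neg h h
      · exact mul_pos h h
    have hqpos : 0 < (v + X) / P := by
      have : (v + X) / P = ((v + X) * P) / (P * P) := by field_simp
      rw [this]; exact div_pos hvXP hPP
    set q : ℝ := (v + X) / P with hqdef
    set tv : ℝ := logb γ q with htvdef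
    have hγt : γ ^ tv = q := Real.rpow_logb hγ0 hγ1 hqpos
    have hH : hfun γ Bstar u₁ u₂ b η₂ η₃ tv sstar wstar = v := by
      show γ ^ tv * Bv * S₂ - X = v
      rw [hγt, hqdef, hPdef]
      field_simp
      ring
    -- the g value at tv
    set gv : ℝ := gfun γ Astar b η₁ η₃ tv sstar wstar with hgvdef
    have hgv : |gv| = |v + X| * M := by
      have h1 : gv = (v + X) * (Astar / Bstar * (S₁ / S₂)) := by
        rw [hgvdef]
        show γ ^ tv * Afun Astar b η₃ (2 * π * wstar) * S₁ = _
        rw [hγt, hqdef, hPdef, hBvdef]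
        unfold Afun Bfun
        field_simp
      rw [h1, abs_mul, hMdef]
    have hvX1 : |X| - |v| ≤ |v + X| := by
      have := abs_add_le (v + X) (-v)
      simp only [abs_neg] at this
      have h2 : v + X + -v = X := by ring
      rw [h2] at this
      linarith
    have hvX2 : |v + X| ≤ |X| + |v| := by
      have := abs_add_le v X
      linarith [abs_add_le v X, abs_sub_comm v X]
    have hgvlo : K * (1 - r) ≤ |gv| := by
      rw [hgv, hKM]
      have h1 : (|X| - |v|) * M ≤ |v + X| * M := mul_le_mul_of_nonneg_right hvX1 hM0
      have h2 : |v| ≤ r * |X| := le_of_lt hv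
      have h3 : (|X| - r * |X|) * M ≤ (|X| - |v|) * M :=
        mul_le_mul_of_nonneg_right (by linarith) hM0
      have h4 : |X| * M * (1 - r) = (|X| - r * |X|) * M := by ring
      linarith
    have hgvhi : |gv| ≤ K * (1 + r) := by
      rw [hgv, hKM]
      have h1 : |v + X| * M ≤ (|X| + |v|) * M := mul_le_mul_of_nonneg_right hvX2 hM0
      have h2 : |v| ≤ r * |X| := le_of_lt hv
      have h3 : (|X| + |v|) * M ≤ (|X| + r * |X|) * M :=
        mul_le_mul_of_nonneg_right (by linarith) hM0
      have h4 : |X| * M * (1 + r) = (|X| + r * |X|) * M := by ring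
      linarith
    -- continuity
    set F : ℝ × ℝ × ℝ → ℝ × ℝ := fun p =>
      (hfun γ Bstar u₁ u₂ b η₂ η₃ p.1 p.2.1 p.2.2, gfun γ Astar b η₁ η₃ p.1 p.2.1 p.2.2)
      with hFdef
    have hcont : ContinuousAt F (tv, sstar, wstar) := by
      have hpow : ContinuousAt (fun p : ℝ × ℝ × ℝ => γ ^ p.1) (tv, sstar, wstar) :=
        (Real.continuousAt_const_rpow (ne_of_gt hγ0)).comp continuousAt_fst
      have hEc : ContinuousAt (fun p : ℝ × ℝ × ℝ => Efun b η₃ (2 * π * p.2.2))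
          (tv, sstar, wstar) := by
        unfold Efun; fun_prop
      have hBc : ContinuousAt (fun p : ℝ × ℝ × ℝ => Bfun Bstar b η₃ (2 * π * p.2.2))
          (tv, sstar, wstar) := by
        unfold Bfun; exact continuousAt_const.div hEc hE
      have hAc : ContinuousAt (fun p : ℝ × ℝ × ℝ => Afun Astar b η₃ (2 * π * p.2.2))
          (tv, sstar, wstar) := by
        unfold Afun; exact continuousAt_const.div hEc hE
      have hxic : ContinuousAt (fun p : ℝ × ℝ × ℝ => xifun u₁ u₂ b η₃ (2 * π * p.2.2))
          (tv, sstar, wstar) := by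
        have hnum : ContinuousAt (fun p : ℝ × ℝ × ℝ =>
            cos (2 * π * p.2.2 + η₃) * u₁ + sin (2 * π * p.2.2 + η₃) * u₂)
            (tv, sstar, wstar) := by fun_prop
        exact hnum.div hEc hE
      have hs1 : ContinuousAt (fun p : ℝ × ℝ × ℝ => sin (2 * π * p.2.1 + η₁))
          (tv, sstar, wstar) := by fun_prop
      have hs2 : ContinuousAt (fun p : ℝ × ℝ × ℝ => sin (2 * π * p.2.1 + η₂))
          (tv, sstar, wstar) := by fun_prop
      exact ContinuousAt.prodMk (((hpow.mul hBc).mul hs2).sub hxic) ((hpow.mul hAc).mul hs1)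
    set ε₀ : ℝ := min δ (K * r) with hε₀def
    have hε₀0 : 0 < ε₀ := lt_min hδ (mul_pos hK0 hr0)
    obtain ⟨δ', hδ'0, hδ'⟩ := Metric.continuousAt_iff.mp hcont ε₀ hε₀0
    obtain ⟨n, hnmem, hnN⟩ := Set.Infinite.exists_gt (hacc tv δ' hδ'0) N
    obtain ⟨i, j, h1, h2, h3⟩ := hnmem
    simp only at h1 h2 h3
    set p : ℝ × ℝ × ℝ := ((z n).1, (z n).2.1 - i, (z n).2.2 - j) with hpdef
    have hdist : dist p (tv, sstar, wstar) < δ' := by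
      rw [Prod.dist_eq, Prod.dist_eq, Real.dist_eq, Real.dist_eq, Real.dist_eq]
      apply max_lt h1
      apply max_lt
      · show |(z n).2.1 - i - sstar| < δ'
        have : (z n).2.1 - i - sstar = (z n).2.1 - sstar - i := by ring
        rw [this]; exact h2
      · show |(z n).2.2 - j - wstar| < δ'
        have : (z n).2.2 - j - wstar = (z n).2.2 - wstar - j := by ring
        rw [this]; exact h3
    have hF := hδ' hdist
    have hFp1 : (F p).1 = hfun γ Bstar u₁ u₂ b η₂ η₃ (z n).1 (z n).2.1 (z n).2.2 := by
      show hfun γ Bstar u₁ u₂ b η₂ η₃ (z n).1 ((z n).2.1 - i) ((z n).2.2 - j) = _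
      have e1 : (z n).2.1 = ((z n).2.1 - i) + i := by ring
      have e2 : (z n).2.2 = ((z n).2.2 - j) + j := by ring
      conv_rhs => rw [e1, e2]
      rw [hfun_per]
    have hFp2 : (F p).2 = gfun γ Astar b η₁ η₃ (z n).1 (z n).2.1 (z n).2.2 := by
      show gfun γ Astar b η₁ η₃ (z n).1 ((z n).2.1 - i) ((z n).2.2 - j) = _
      have e1 : (z n).2.1 = ((z n).2.1 - i) + i := by ring
      have e2 : (z n).2.2 = ((z n).2.2 - j) + j := by ring
      conv_rhs => rw [e1, e2]
      rw [gfun_per]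
    have hFmax : max (dist (F p).1 (F (tv, sstar, wstar)).1)
        (dist (F p).2 (F (tv, sstar, wstar)).2) < ε₀ := by
      rw [← Prod.dist_eq]; exact hF
    have hF1 : dist (F p).1 (F (tv, sstar, wstar)).1 < ε₀ :=
      lt_of_le_of_lt (le_max_left _ _) hFmax
    have hF2 : dist (F p).2 (F (tv, sstar, wstar)).2 < ε₀ :=
      lt_of_le_of_lt (le_max_right _ _) hFmax
    have hFq1 : (F (tv, sstar, wstar)).1 = v := hH
    have hFq2 : (F (tv, sstar, wstar)).2 = gv := rfl
    rw [hFp1, hFq1, Real.dist_eq] at hF1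
    rw [hFp2, hFq2, Real.dist_eq] at hF2
    refine ⟨n, le_of_lt hnN, lt_of_lt_of_le hF1 (min_le_left _ _), ?_, ?_⟩
    · have h1 := abs_sub_abs_le_abs_sub gv (gfun γ Astar b η₁ η₃ (z n).1 (z n).2.1 (z n).2.2)
      have h2 : |gv - gfun γ Astar b η₁ η₃ (z n).1 (z n).2.1 (z n).2.2| < K * r := by
        rw [abs_sub_comm]; exact lt_of_lt_of_le hF2 (min_le_right _ _)
      rw [hC₁def]
      have he : K * (1 - 2 * r) = K * (1 - r) - K * r := by ring
      linarith
    · have h1 := abs_sub_abs_le_abs_sub (gfun γ Astar b η₁ η₃ (z n).1 (z n).2.1 (z n).2.2) gv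
      have h2 : |gfun γ Astar b η₁ η₃ (z n).1 (z n).2.1 (z n).2.2 - gv| < K * r :=
        lt_of_lt_of_le hF2 (min_le_right _ _)
      rw [hC₂def]
      have he : K * (1 + 2 * r) = K * (1 + r) + K * r := by ring
      linarith
  -- build the subsequence
  classical
  set d : ℕ → ℚ := fun k => Denumerable.ofNat ℚ k.unpair.1 with hddef
  set vtgt : ℕ → ℝ := fun k => if |((d k : ℝ))| < ε then ((d k : ℝ)) else 0 with hvdef
  set δtgt : ℕ → ℝ := fun k => 1 / ((k.unpair.2 : ℝ) + 1) with hδtdef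
  have hvlt : ∀ k, |vtgt k| < ε := by
    intro k
    have hvk : vtgt k = if |((d k : ℝ))| < ε then ((d k : ℝ)) else 0 := rfl
    rw [hvk]
    split_ifs with h
    · exact h
    · simpa using hε0
  have hδt0 : ∀ k, 0 < δtgt k := by
    intro k
    have hδk : δtgt k = 1 / ((k.unpair.2 : ℝ) + 1) := rfl
    rw [hδk]; positivity
  have key' : ∀ k N : ℕ, ∃ n : ℕ, N ≤ n ∧
      |hfun γ Bstar u₁ u₂ b η₂ η₃ (z n).1 (z n).2.1 (z n).2.2 - vtgt k| < δtgt k ∧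
      C₁ ≤ |gfun γ Astar b η₁ η₃ (z n).1 (z n).2.1 (z n).2.2| ∧
      |gfun γ Astar b η₁ η₃ (z n).1 (z n).2.1 (z n).2.2| ≤ C₂ :=
    fun k N => key (vtgt k) (hvlt k) (δtgt k) (hδt0 k) N
  choose f hfle hfQ using key'
  set φ : ℕ → ℕ := fun k => Nat.rec (f 0 0) (fun k ih => f (k+1) (ih+1)) k with hφdef
  have hφsucc : ∀ k, φ (k+1) = f (k+1) (φ k + 1) := fun k => rfl
  have hφmono : StrictMono φ := by
    apply strictMono_nat_of_lt_succ
    intro k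
    rw [hφsucc]
    exact lt_of_lt_of_le (Nat.lt_succ_self _) (hfle (k+1) (φ k + 1))
  have hφQ : ∀ k, |hfun γ Bstar u₁ u₂ b η₂ η₃ (z (φ k)).1 (z (φ k)).2.1 (z (φ k)).2.2 - vtgt k|
      < δtgt k ∧
      C₁ ≤ |gfun γ Astar b η₁ η₃ (z (φ k)).1 (z (φ k)).2.1 (z (φ k)).2.2| ∧
      |gfun γ Astar b η₁ η₃ (z (φ k)).1 (z (φ k)).2.1 (z (φ k)).2.2| ≤ C₂ := by
    intro k
    cases k with
    | zero => exact hfQ 0 0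
    | succ k => exact hfQ (k+1) (φ k + 1)
  refine ⟨φ, hφmono, ε, hε0, C₁, C₂, hC₁0, hC₁₂, halt, ?_, fun n => (hφQ n).2⟩
  intro x hx
  rw [Metric.mem_closure_iff]
  intro ρ hρ
  have hx1 : x < min (x + ρ/2) ε := lt_min (by linarith) hx.2
  obtain ⟨qq, hq1, hq2⟩ := exists_rat_btwn hx1
  have hq3 : (qq : ℝ) < ε := lt_of_lt_of_le hq2 (min_le_right _ _)
  have hq4 : (qq : ℝ) < x + ρ/2 := lt_of_lt_of_le hq2 (min_le_left _ _)
  have hqabs : |(qq : ℝ)| < ε := abs_lt.mpr ⟨lt_trans hx.1 hq1, hq3⟩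
  obtain ⟨m, hm⟩ := exists_nat_one_div_lt (half_pos hρ)
  set k : ℕ := Nat.pair (@Encodable.encode ℚ Denumerable.toEncodable qq) m with hkdef
  have hdk : d k = qq := by
    show Denumerable.ofNat ℚ (Nat.unpair (Nat.pair (@Encodable.encode ℚ Denumerable.toEncodable qq) m)).1 = qq
    rw [Nat.unpair_pair]
    exact Denumerable.ofNat_encode qq
  have hvk : vtgt k = (qq : ℝ) := by
    have h0 : vtgt k = if |((d k : ℝ))| < ε then ((d k : ℝ)) else 0 := rfl
    rw [h0, hdk, if_pos hqabs]
  have hδk : δtgt k = 1 / ((m : ℝ) + 1) := by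
    show 1 / (((Nat.pair (@Encodable.encode ℚ Denumerable.toEncodable qq) m).unpair.2 : ℝ) + 1) = _
    rw [Nat.unpair_pair]
  obtain ⟨hh, _, _⟩ := hφQ k
  rw [hvk, hδk] at hh
  refine ⟨hfun γ Bstar u₁ u₂ b η₂ η₃ (z (φ k)).1 (z (φ k)).2.1 (z (φ k)).2.2, ⟨k, rfl⟩, ?_⟩
  rw [Real.dist_eq]
  have htri := abs_sub_le x (qq : ℝ)
    (hfun γ Bstar u₁ u₂ b η₂ η₃ (z (φ k)).1 (z (φ k)).2.1 (z (φ k)).2.2)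
  have h1 : |x - (qq : ℝ)| < ρ/2 := by
    rw [abs_lt]; constructor <;> [linarith; linarith]
  have h2 : |(qq : ℝ) -
      hfun γ Bstar u₁ u₂ b η₂ η₃ (z (φ k)).1 (z (φ k)).2.1 (z (φ k)).2.2| < ρ/2 := by
    rw [abs_sub_comm]; linarith
  linarith
end

section
/- Suppose 1, θ, α₁ are linearly independent over ℚ, and let q₂ be a positive integer and r₂ ∈ ℕ. Then the set { ((q₂·m + r₂) − k·θ, k·α₁ mod 1) : k, m ∈ ℕ } is dense in ℝ × (ℝ/ℤ). In particular, if α₂ = p₂/q₂ is rational, then the closure of S contains ℝ × (ℝ/ℤ) × { r₂·α₂ mod 1 }. -/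
/-- The set `S = { (m − k·θ, k·α₁ mod 1, m·α₂ mod 1) : k, m ∈ ℕ }` in
`ℝ × (ℝ/ℤ) × (ℝ/ℤ)`. -/
def Sset (θ α₁ α₂ : ℝ) : Set (ℝ × AddCircle (1 : ℝ) × AddCircle (1 : ℝ)) :=
  {x | ∃ k m : ℕ, x = ((m : ℝ) - (k : ℝ) * θ,
    (((k : ℝ) * α₁ : ℝ) : AddCircle (1 : ℝ)),
    (((m : ℝ) * α₂ : ℝ) : AddCircle (1 : ℝ)))}

/-!
Put `x₀ = (θ/q₂, α₁)` in the torus `(ℝ/ℤ)²`. A point `(t, s)` is approximated by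
`((q₂ m + r₂) - kθ, kα₁)` as soon as `k • x₀` is close to `((r₂ - t)/q₂, s)`, and taking `k`
large forces `m ≥ 0`; so it suffices that the multiples `k • x₀`, `k ≥ N`, are dense.

This is Kronecker's theorem. The preimage `G ⊆ ℝ²` of `ℤ • x₀` has arbitrarily small nonzero
elements (compactness of the torus, `θ/q₂` irrational), so its closure contains a line `ℝu`.
The linear form with kernel `ℝu` maps `G` to a subgroup of `ℝ` that cannot be cyclic, since
that would give a rational relation between `1, θ/q₂, α₁`; it is therefore dense, and so is `G`.
Recurrence in the compact torus then upgrades density of `ℤ • x₀` to density of the tails.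

If `α₂ = p₂/q₂`, then `(q₂ m + r₂) α₂ ≡ r₂ α₂ (mod 1)`, so `(x, y) ↦ (x, y, r₂ α₂)` maps the
dense set into `S`.
-/

open Filter Topology Set

section CompactGroup

variable {A : Type*} [SeminormedAddCommGroup A] [CompactSpace A]

theorem exists_lt_norm_nsmul_lt (x : A) {δ : ℝ} (hδ : 0 < δ) (N : ℕ) :
    ∃ n, N < n ∧ ‖n • x‖ < δ := by
  obtain ⟨y, -, φ, hφ, hlim⟩ :=
    isCompact_univ.tendsto_subseq (x := fun k : ℕ => (k * (N + 1)) • x) fun _ => mem_univ _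
  obtain ⟨i, hi⟩ := Metric.cauchySeq_iff'.mp hlim.cauchySeq δ hδ
  have hlt : φ i < φ (i + 1) := hφ i.lt_succ_self
  refine ⟨(φ (i + 1) - φ i) * (N + 1), by nlinarith [Nat.sub_pos_of_lt hlt], ?_⟩
  have := hi (i + 1) i.le_succ
  rwa [dist_eq_norm, Function.comp_apply, Function.comp_apply, sub_eq_add_neg,
    ← sub_nsmul x (Nat.mul_le_mul_right _ hlt.le), ← Nat.sub_mul] at this

theorem DenseRange.add_nsmul {x : A} (hx : DenseRange (· • x : ℤ → A)) (N : ℕ) :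
    DenseRange fun n : ℕ => (N + n) • x := by
  rw [Metric.denseRange_iff] at hx ⊢
  intro z r hr
  obtain ⟨j, hj⟩ := hx z (r / 2) (half_pos hr)
  obtain ⟨d, hd, hdx⟩ := exists_lt_norm_nsmul_lt x (half_pos hr) (N + j.natAbs)
  refine ⟨(j + d - N).toNat, ?_⟩
  have hcast : ((N + (j + d - N).toNat : ℕ) : ℤ) = j + d := by omega
  calc dist z ((N + (j + d - N).toNat) • x) = dist z (j • x + d • x) := by
        rw [← natCast_zsmul, hcast, add_zsmul, natCast_zsmul]
    _ ≤ dist z (j • x) + dist (j • x) (j • x + d • x) := dist_triangle _ _ _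
    _ < r := by rw [dist_self_add_right]; linarith

end CompactGroup

theorem AddSubgroup.exists_ne_zero_forall_smul_mem_topologicalClosure {E : Type*}
    [NormedAddCommGroup E] [NormedSpace ℝ E] [ProperSpace E] {G : AddSubgroup E}
    (hG : ∀ δ > 0, ∃ g ∈ G, g ≠ 0 ∧ ‖g‖ < δ) :
    ∃ u : E, u ≠ 0 ∧ ∀ t : ℝ, t • u ∈ G.topologicalClosure := by
  choose g hgG hg0 hg using fun n : ℕ => hG (1 / (n + 1)) Nat.one_div_pos_of_nat
  have hg_lim : Tendsto (fun n => ‖g n‖) atTop (𝓝 0) :=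
    squeeze_zero (fun _ => norm_nonneg _) (fun n => (hg n).le)
      tendsto_one_div_add_atTop_nhds_zero_nat
  obtain ⟨u, hu, φ, hφ, hdir⟩ := (isCompact_sphere (0 : E) 1).tendsto_subseq
    (x := fun n => ‖g n‖⁻¹ • g n) fun n => by simp [norm_smul, hg0 n]
  refine ⟨u, ne_zero_of_mem_unit_sphere ⟨u, hu⟩, fun t => ?_⟩
  rw [← SetLike.mem_coe, topologicalClosure_coe, Metric.mem_closure_iff]
  intro ε hε
  have hnear : ∀ᶠ n in atTop, dist (t • u) (t • (‖g (φ n)‖⁻¹ • g (φ n))) < ε / 2 :=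
    ((tendsto_const_nhds.smul hdir).eventually (Metric.ball_mem_nhds _ (half_pos hε))).mono
      fun _ h => by rwa [dist_comm]
  have hsmall : ∀ᶠ n in atTop, ‖g (φ n)‖ < ε :=
    (hg_lim.comp hφ.tendsto_atTop).eventually (gt_mem_nhds hε)
  obtain ⟨n, hn, hgn⟩ := (hnear.and hsmall).exists
  set v := g (φ n)
  have hround : dist (t • (‖v‖⁻¹ • v)) (round (t / ‖v‖) • v) ≤ ‖v‖ / 2 := by
    rw [smul_smul, ← div_eq_mul_inv, dist_eq_norm, ← Int.cast_smul_eq_zsmul ℝ, ← sub_smul,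
      norm_smul, Real.norm_eq_abs]
    nlinarith [abs_sub_round (t / ‖v‖), norm_nonneg v]
  refine ⟨round (t / ‖v‖) • v, zsmul_mem (hgG _) _, ?_⟩
  linarith [dist_triangle (t • u) (t • (‖v‖⁻¹ • v)) (round (t / ‖v‖) • v)]

theorem AddSubgroup.dense_of_forall_map_eq_zero_mem_topologicalClosure {E : Type*}
    [AddCommGroup E] [Module ℝ E] [TopologicalSpace E] [IsTopologicalAddGroup E]
    [ContinuousSMul ℝ E] {G : AddSubgroup E}
    (f : E →ₗ[ℝ] ℝ) (hker : ∀ x, f x = 0 → x ∈ G.topologicalClosure) (hf : Dense (f '' G)) :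
    Dense (G : Set E) := by
  obtain ⟨_, ⟨g₀, -, rfl⟩, hg₀⟩ := hf.exists_mem_open isOpen_compl_singleton ⟨1, one_ne_zero⟩
  set w := (f g₀)⁻¹ • g₀
  have hw : f w = 1 := by simp [w, inv_mul_cancel₀ hg₀]
  set K := G.topologicalClosure
  rw [dense_iff_closure_eq, ← topologicalClosure_coe]
  refine eq_univ_of_forall fun z => ?_
  -- `z - c • w ∈ K` for a dense, hence (by closedness) for every, `c : ℝ`; take `c = 0`
  have hclosed : IsClosed {c : ℝ | z - c • w ∈ K} :=
    G.isClosed_topologicalClosure.preimage (f := fun c : ℝ => z - c • w) (by fun_prop)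
  have hsub : (Homeomorph.subLeft (f z)) '' (f '' G) ⊆ {c : ℝ | z - c • w ∈ K} := by
    rintro _ ⟨_, ⟨g, hg, rfl⟩, rfl⟩
    have hsplit : z - (f z - f g) • w = g + (z - g - (f z - f g) • w) := by abel
    change z - (f z - f g) • w ∈ K
    rw [hsplit]
    exact K.add_mem (G.le_topologicalClosure hg) (hker _ (by simp [hw]))
  have := hclosed.closure_subset_iff.mpr hsub
    (((Homeomorph.subLeft (f z)).isDenseEmbedding.dense_image.mpr hf).closure_eq ▸ mem_univ 0)
  exact (by simpa using this : z ∈ K)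

theorem Prod.exists_smul_eq_of_mul_sub_mul_eq_zero {u x : ℝ × ℝ} (hu : u ≠ 0)
    (h : u.2 * x.1 - u.1 * x.2 = 0) : ∃ t : ℝ, t • u = x := by
  by_cases hu₁ : u.1 = 0
  · have hu₂ : u.2 ≠ 0 := fun hu₂ => hu (Prod.ext hu₁ hu₂)
    refine ⟨x.2 / u.2, Prod.ext ?_ ?_⟩
    · simp only [Prod.smul_fst, smul_eq_mul, hu₁, mul_zero]
      simpa [hu₁, hu₂, eq_comm] using h
    · simp only [Prod.smul_snd, smul_eq_mul]
      field_simp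
  · refine ⟨x.1 / u.1, Prod.ext ?_ ?_⟩
    · simp only [Prod.smul_fst, smul_eq_mul]
      field_simp
    · simp only [Prod.smul_snd, smul_eq_mul]
      field_simp
      linear_combination h

section Kronecker

variable {a b : ℝ}

theorem LinearIndependent.eq_zero_of_add_mul_add_mul_eq_zero
    (h : LinearIndependent ℚ ![1, a, b]) {n₀ n₁ n₂ : ℤ} (hn : n₀ + n₁ * a + n₂ * b = 0) :
    n₀ = 0 ∧ n₁ = 0 ∧ n₂ = 0 := by
  have := Fintype.linearIndependent_iff.mp h ![n₀, n₁, n₂]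
    (by simpa [Fin.sum_univ_three, Rat.smul_def] using hn)
  exact ⟨by simpa using this 0, by simpa using this 1, by simpa using this 2⟩

theorem LinearIndependent.eq_zero_of_mem_zmultiples (h : LinearIndependent ℚ ![1, a, b])
    {r c₁ c₂ : ℝ} (h₁ : c₁ ∈ AddSubgroup.zmultiples r) (h₂ : c₂ ∈ AddSubgroup.zmultiples r)
    (h₃ : a * c₁ + b * c₂ ∈ AddSubgroup.zmultiples r) : c₁ = 0 ∧ c₂ = 0 := by
  obtain ⟨n₁, rfl⟩ := h₁
  obtain ⟨n₂, rfl⟩ := h₂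
  obtain ⟨n₃, hn₃⟩ := h₃
  simp only [zsmul_eq_mul] at hn₃ ⊢
  rcases eq_or_ne r 0 with rfl | hr
  · simp
  obtain ⟨-, rfl, rfl⟩ := h.eq_zero_of_add_mul_add_mul_eq_zero (n₀ := -n₃) (n₁ := n₁) (n₂ := n₂)
    (mul_right_cancel₀ hr (by push_cast; linear_combination -hn₃))
  simp

def torusMk : ℝ × ℝ →+ AddCircle (1 : ℝ) × AddCircle (1 : ℝ) :=
  (QuotientAddGroup.mk' _).prodMap (QuotientAddGroup.mk' _)

@[simp]
theorem torusMk_apply (w : ℝ × ℝ) :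
    torusMk w = ((w.1 : AddCircle (1 : ℝ)), (w.2 : AddCircle (1 : ℝ))) :=
  rfl

theorem continuous_torusMk : Continuous torusMk :=
  continuous_quotient_mk'.prodMap continuous_quotient_mk'

theorem torusMk_surjective : Function.Surjective torusMk :=
  Prod.map_surjective.mpr ⟨QuotientAddGroup.mk_surjective, QuotientAddGroup.mk_surjective⟩

@[simp]
theorem UnitAddCircle.coe_intCast (n : ℤ) : ((n : ℝ) : AddCircle (1 : ℝ)) = 0 :=
  (AddCircle.coe_eq_zero_iff 1).mpr ⟨n, by simp⟩

theorem UnitAddCircle.exists_coe_eq_and_abs_eq (y : AddCircle (1 : ℝ)) :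
    ∃ x : ℝ, (x : AddCircle (1 : ℝ)) = y ∧ |x| = ‖y‖ := by
  obtain ⟨x, rfl⟩ := QuotientAddGroup.mk_surjective y
  refine ⟨x - round x, ?_, (UnitAddCircle.norm_eq).symm⟩
  rw [AddCircle.coe_sub, UnitAddCircle.coe_intCast, sub_zero]

theorem exists_torusMk_eq_and_norm_eq (y : AddCircle (1 : ℝ) × AddCircle (1 : ℝ)) :
    ∃ w, torusMk w = y ∧ ‖w‖ = ‖y‖ := by
  obtain ⟨x₁, hx₁, hn₁⟩ := UnitAddCircle.exists_coe_eq_and_abs_eq y.1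
  obtain ⟨x₂, hx₂, hn₂⟩ := UnitAddCircle.exists_coe_eq_and_abs_eq y.2
  exact ⟨(x₁, x₂), by simp [hx₁, hx₂], by simp [Prod.norm_def, hn₁, hn₂]⟩

theorem denseRange_zsmul_torusMk (h : LinearIndependent ℚ ![1, a, b]) :
    DenseRange (· • torusMk (a, b) : ℤ → AddCircle (1 : ℝ) × AddCircle (1 : ℝ)) := by
  set x₀ := torusMk (a, b)
  set G := (AddSubgroup.zmultiples x₀).comap torusMk
  have hx₀ : ∀ n : ℕ, n • x₀ = 0 → n = 0 := by
    intro n hn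
    have hna : ((n * a : ℝ) : AddCircle (1 : ℝ)) = 0 := by
      simpa [x₀] using congrArg Prod.fst hn
    obtain ⟨m, hm⟩ := (AddCircle.coe_eq_zero_iff 1).mp hna
    exact_mod_cast (h.eq_zero_of_add_mul_add_mul_eq_zero (n₀ := -m) (n₁ := n) (n₂ := 0)
      (by rw [zsmul_one] at hm; push_cast; linarith)).2.1
  have hsmall : ∀ δ > 0, ∃ g ∈ G, g ≠ 0 ∧ ‖g‖ < δ := by
    intro δ hδ
    obtain ⟨n, hn, hnδ⟩ := exists_lt_norm_nsmul_lt x₀ hδ 0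
    obtain ⟨g, hg, hgn⟩ := exists_torusMk_eq_and_norm_eq (n • x₀)
    refine ⟨g, ⟨n, by simp [hg]⟩, ?_, hgn ▸ hnδ⟩
    rintro rfl
    exact hn.ne' (hx₀ n (by rw [← hg, map_zero]))
  obtain ⟨u, hu, hline⟩ := G.exists_ne_zero_forall_smul_mem_topologicalClosure hsmall
  set f : ℝ × ℝ →ₗ[ℝ] ℝ := u.2 • LinearMap.fst ℝ ℝ ℝ - u.1 • LinearMap.snd ℝ ℝ ℝ
  have hf : ∀ x, f x = u.2 * x.1 - u.1 * x.2 := fun _ => rfl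
  have hG : Dense (G : Set (ℝ × ℝ)) := by
    refine G.dense_of_forall_map_eq_zero_mem_topologicalClosure f (fun x hx => ?_) ?_
    · obtain ⟨t, rfl⟩ := Prod.exists_smul_eq_of_mul_sub_mul_eq_zero hu (hf x ▸ hx)
      exact hline t
    rcases (G.map f.toAddMonoidHom).dense_or_cyclic with hd | ⟨r, hr⟩
    · simpa using hd
    -- a cyclic image would give an integer relation between `1`, `a`, `b`
    have hmem : ∀ w ∈ G, f w ∈ AddSubgroup.zmultiples r := fun w hw => by
      rw [AddSubgroup.zmultiples_eq_closure, ← hr]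
      exact AddSubgroup.mem_map_of_mem _ hw
    have hlattice : ∀ m n : ℤ, ((m, n) : ℝ × ℝ) ∈ G := fun m n => by
      simpa [G, Prod.zero_eq_mk] using zero_mem (AddSubgroup.zmultiples x₀)
    obtain ⟨h₁, h₂⟩ := h.eq_zero_of_mem_zmultiples (c₁ := u.2) (c₂ := -u.1) (r := r)
      (by simpa [hf] using hmem _ (hlattice 1 0)) (by simpa [hf] using hmem _ (hlattice 0 1))
      (by simpa [hf, mul_comm, sub_eq_add_neg] using
        hmem (a, b) (AddSubgroup.mem_zmultiples x₀))
    exact absurd (Prod.ext (neg_eq_zero.mp h₂) h₁) hu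
  have := torusMk_surjective.denseRange.dense_image continuous_torusMk hG
  rwa [AddSubgroup.coe_comap, image_preimage_eq _ torusMk_surjective,
    AddSubgroup.coe_zmultiples] at this

end Kronecker

theorem LinearIndependent.div_ratCast {θ α : ℝ} (h : LinearIndependent ℚ ![1, θ, α]) {q : ℚ}
    (hq : q ≠ 0) : LinearIndependent ℚ ![1, θ / q, α] := by
  convert h.units_smul ![1, Units.mk0 q⁻¹ (inv_ne_zero hq), 1] using 1
  ext i
  fin_cases i <;> simp [Rat.smul_def, div_eq_inv_mul]

theorem dense_progression_sub_mul {θ α : ℝ} (hθ : 0 < θ)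
    (hli : LinearIndependent ℚ ![1, θ, α]) {q : ℕ} (hq : 0 < q) (r : ℕ) :
    Dense {x : ℝ × AddCircle (1 : ℝ) | ∃ k m : ℕ,
      x = (((q * m + r : ℕ) : ℝ) - (k : ℝ) * θ, (((k : ℝ) * α : ℝ) : AddCircle (1 : ℝ)))} := by
  have hq' : (0 : ℝ) < q := by exact_mod_cast hq
  have hkron := denseRange_zsmul_torusMk (hli.div_ratCast (q := q) (by exact_mod_cast hq.ne'))
  rw [Metric.dense_iff]
  rintro ⟨t, s⟩ ε hε
  obtain ⟨N, hN⟩ := exists_nat_gt ((r + |t| + ε) / θ)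
  rw [div_lt_iff₀ hθ] at hN
  -- approximate `k θ ≡ r - t (mod q)` and `k α ≡ s (mod 1)` with `k ≥ N`
  obtain ⟨n, hn⟩ := Metric.denseRange_iff.mp (hkron.add_nsmul N)
    ((((r - t) / q : ℝ) : AddCircle (1 : ℝ)), s) (ε / q) (by positivity)
  set k := N + n
  have hk : k • torusMk (θ / q, α) = torusMk (k * θ / q, k * α) := by
    rw [← map_nsmul, Prod.smul_mk, nsmul_eq_mul, nsmul_eq_mul, mul_div_assoc]
  rw [Rat.cast_natCast, hk, torusMk_apply, Prod.dist_eq, max_lt_iff, dist_comm, dist_eq_norm,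
    ← AddCircle.coe_sub, UnitAddCircle.norm_eq, lt_div_iff₀ hq'] at hn
  obtain ⟨h₁, h₂⟩ := hn
  set R := round (k * θ / q - (r - t) / q)
  have hR : |(r + q * R) - k * θ - t| < ε := by
    have : (r + q * R) - k * θ - t = -(k * θ / q - (r - t) / q - R) * q := by field_simp; ring
    rwa [this, abs_mul, abs_neg, abs_of_pos hq']
  have hR₀ : 0 ≤ R := by
    have hNk : (N : ℝ) * θ ≤ k * θ := by gcongr; exact_mod_cast Nat.le_add_right N n
    have : (0 : ℝ) < q * R := by linarith [(abs_lt.mp hR).1, neg_abs_le t]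
    exact_mod_cast (pos_of_mul_pos_right this hq'.le).le
  refine ⟨_, ?_, k, R.toNat, rfl⟩
  have hm : ((q * R.toNat + r : ℕ) : ℝ) = r + q * R := by
    rw [Nat.cast_add, Nat.cast_mul, ← Int.cast_natCast R.toNat, Int.toNat_of_nonneg hR₀]
    ring
  rw [Metric.mem_ball, Prod.dist_eq, max_lt_iff, Real.dist_eq, hm, dist_comm]
  exact ⟨hR, h₂.trans_le (div_le_self hε.le (by exact_mod_cast hq))⟩

theorem stmt10_general (θ α₁ α₂ : ℝ) (hθ : 0 < θ)
    (hli : LinearIndependent ℚ ![(1 : ℝ), θ, α₁])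
    (q₂ : ℕ) (hq₂ : 0 < q₂) (r₂ : ℕ) :
    Dense {x : ℝ × AddCircle (1 : ℝ) | ∃ k m : ℕ,
      x = (((q₂ * m + r₂ : ℕ) : ℝ) - (k : ℝ) * θ,
        (((k : ℝ) * α₁ : ℝ) : AddCircle (1 : ℝ)))} ∧
    ∀ p₂ : ℤ, α₂ = (p₂ : ℝ) / (q₂ : ℝ) →
      ∀ (t : ℝ) (s : AddCircle (1 : ℝ)),
        (t, s, (((r₂ : ℝ) * α₂ : ℝ) : AddCircle (1 : ℝ))) ∈ closure (Sset θ α₁ α₂) := by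
  have hdense := dense_progression_sub_mul hθ hli hq₂ r₂
  refine ⟨hdense, fun p₂ hp₂ t s => ?_⟩
  refine map_mem_closure
    (f := fun x : ℝ × AddCircle (1 : ℝ) => (x.1, x.2, (((r₂ : ℝ) * α₂ : ℝ) : AddCircle (1 : ℝ))))
    (by fun_prop) (hdense.closure_eq ▸ mem_univ (t, s)) ?_
  rintro _ ⟨k, m, rfl⟩
  refine ⟨k, q₂ * m + r₂, Prod.ext rfl (Prod.ext rfl ?_)⟩
  have hq : (q₂ : ℝ) ≠ 0 := by exact_mod_cast hq₂.ne'
  have hshift : (((q₂ * m + r₂ : ℕ) : ℝ) * α₂) = ((m * p₂ : ℤ) : ℝ) + r₂ * α₂ := by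
    rw [hp₂]; push_cast; field_simp
  rw [hshift, AddCircle.coe_add, UnitAddCircle.coe_intCast, zero_add]

/-- Suppose `1, θ, α₁` are linearly independent over `ℚ`, `q₂` is a positive integer and
`r₂ ∈ ℕ`. Then `{ ((q₂·m + r₂) − k·θ, k·α₁ mod 1) : k, m ∈ ℕ }` is dense in `ℝ × (ℝ/ℤ)`.
In particular, if `α₂ = p₂/q₂` is rational, then the closure of `S` contains
`ℝ × (ℝ/ℤ) × { r₂·α₂ mod 1 }`. -/
theorem stmt10 (θ α₁ α₂ : ℝ) (hθ : 0 < θ)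
    (hα₁ : α₁ ∈ Set.Ioo (0 : ℝ) (1 / 2)) (hα₂ : α₂ ∈ Set.Ioo (0 : ℝ) (1 / 2))
    (hli : LinearIndependent ℚ ![(1 : ℝ), θ, α₁])
    (q₂ : ℕ) (hq₂ : 0 < q₂) (r₂ : ℕ) :
    Dense {x : ℝ × AddCircle (1 : ℝ) | ∃ k m : ℕ,
      x = (((q₂ * m + r₂ : ℕ) : ℝ) - (k : ℝ) * θ,
        (((k : ℝ) * α₁ : ℝ) : AddCircle (1 : ℝ)))} ∧
    ∀ p₂ : ℤ, α₂ = (p₂ : ℝ) / (q₂ : ℝ) →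
      ∀ (t : ℝ) (s : AddCircle (1 : ℝ)),
        (t, s, (((r₂ : ℝ) * α₂ : ℝ) : AddCircle (1 : ℝ))) ∈ closure (Sset θ α₁ α₂) :=
  stmt10_general θ α₁ α₂ hθ hli q₂ hq₂ r₂
end

section
/- Suppose α₁ is irrational, θ = (p₁/q₁)·α₁ + p₂/q₂ where p₁, p₂ ∈ ℤ and q₁, q₂ are positive integers, and α₂ = p₃/q₃ with p₃ ∈ ℤ and q₃ a positive integer. Then for every s ∈ ℝ and every r₂ ∈ ℕ, the point (r₂ − (p₁/q₁)·s, s mod 1, r₂·α₂ mod 1) lies in the closure of S. -/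
/-!
Put `β = q₂α₁`, which is irrational. For `k = q₁q₂q₃n` one has `kθ = p₁q₃ · nβ + q₁q₃p₂n`, so if
`nβ = x + ℓ` with `ℓ ∈ ℤ`, then `m = r₂ + q₃(p₁ℓ + q₁p₂n)` gives the point
`(m - kθ, kα₁, mα₂) = (r₂ - p₁q₃x, q₁q₃x, r₂α₂)` of `S` (mod 1 in the last two coordinates; the
last one because `m ≡ r₂ mod q₃`). The only constraint is `m ≥ 0`, which holds for `x` bounded and
`n` large. Since the irrational rotation is minimal, every point of the circle is a cluster point of
`n • β` as `n → ∞`, so the admissible `x` are dense in `ℝ`; the target is the image of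
`x = s / (q₁q₃)` under a continuous map.
-/

open Set Filter Metric

theorem DenseRange.dense_setOf_nsmul_of_ge {G : Type*} [AddGroup G] [TopologicalSpace G]
    [CompactSpace G] [IsTopologicalAddGroup G] {a : G} (ha : DenseRange (· • a : ℤ → G)) (M : ℕ) :
    Dense {y | ∃ n ≥ M, n • a = y} := by
  refine dense_iff_inter_open.2 fun U hU ⟨x, hxU⟩ => ?_
  have hx : MapClusterPt x atTop (· • a : ℕ → G) := by
    rw [mapClusterPt_atTop_nsmul_iff_mem_topologicalClosure_zmultiples,
      ← SetLike.mem_coe, AddSubgroup.topologicalClosure_coe, AddSubgroup.coe_zmultiples,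
      ha.closure_range]
    exact mem_univ x
  obtain ⟨n, hn, hnU⟩ := frequently_atTop.1 (hx.frequently (hU.mem_nhds hxU)) M
  exact ⟨n • a, hnU, n, hn, rfl⟩

theorem Irrational.dense_setOf_coe_eq_nsmul_of_ge {β : ℝ} (hβ : Irrational β) (M : ℕ) :
    Dense {x : ℝ | ∃ n ≥ M, n • (β : AddCircle (1 : ℝ)) = x} :=
  ((AddCircle.denseRange_zsmul_coe_iff.2 (by rwa [div_one])).dense_setOf_nsmul_of_ge M).preimage
    QuotientAddGroup.isOpenMap_coe

namespace AddCircle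

theorem coe_add_intCast (x : ℝ) (z : ℤ) : ((x + z : ℝ) : AddCircle (1 : ℝ)) = x := by
  rw [coe_add, ← zsmul_one, coe_zsmul, coe_period, smul_zero, add_zero]

theorem exists_eq_add_intCast_of_coe_eq {a b : ℝ} (h : (a : AddCircle (1 : ℝ)) = b) :
    ∃ ℓ : ℤ, a = b + ℓ := by
  obtain ⟨ℓ, hℓ⟩ := (coe_eq_zero_iff (p := (1 : ℝ)) (x := a - b)).1 (by rw [coe_sub, h, sub_self])
  exact ⟨ℓ, by rw [← zsmul_one, hℓ]; ring⟩

end AddCircle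

theorem mem_Sset_of_eq_add_intCast {θ α₁ α₂ : ℝ} {p₁ p₂ p₃ : ℤ} {q₁ q₂ q₃ : ℕ}
    (hθ : 0 ≤ θ) (hq₁ : 0 < q₁) (hq₂ : 0 < q₂) (hq₃ : 0 < q₃)
    (hθeq : θ = (p₁ : ℝ) / q₁ * α₁ + (p₂ : ℝ) / q₂) (hα₂eq : α₂ = (p₃ : ℝ) / q₃)
    (r₂ n : ℕ) (x : ℝ) (ℓ : ℤ) (hx : n * (q₂ * α₁) = x + ℓ) (hbound : |p₁ * q₃ * x| ≤ n * θ) :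
    ((r₂ : ℝ) - p₁ * q₃ * x, ((q₁ * q₃ * x : ℝ) : AddCircle (1 : ℝ)),
      ((r₂ * α₂ : ℝ) : AddCircle (1 : ℝ))) ∈ Sset θ α₁ α₂ := by
  set k : ℕ := q₁ * q₂ * q₃ * n with hk
  set m : ℤ := r₂ + q₃ * (p₁ * ℓ + q₁ * p₂ * n) with hm
  have hkθ : (k : ℝ) * θ = p₁ * q₃ * (x + ℓ) + q₁ * q₃ * p₂ * n := by
    rw [← hx, hk, hθeq]; push_cast; field_simp
  have hmk : (m : ℝ) - k * θ = r₂ - p₁ * q₃ * x := by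
    rw [hkθ, hm]; push_cast; ring
  have hnk : (n : ℝ) * θ ≤ k * θ := by
    gcongr; exact_mod_cast Nat.le_mul_of_pos_left n (by positivity)
  obtain ⟨m', hm'⟩ : ∃ m' : ℕ, (m' : ℤ) = m := by
    refine ⟨m.toNat, Int.toNat_of_nonneg ?_⟩
    have : (0 : ℝ) ≤ m := by linarith [le_abs_self (p₁ * q₃ * x), (r₂.cast_nonneg : (0 : ℝ) ≤ r₂)]
    exact_mod_cast this
  have hm'R : (m' : ℝ) = m := by exact_mod_cast hm'
  refine ⟨k, m', ?_⟩
  simp only [Prod.mk.injEq]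
  refine ⟨by rw [hm'R, hmk], ?_, ?_⟩
  · rw [← AddCircle.coe_add_intCast (q₁ * q₃ * x) (q₁ * q₃ * ℓ)]
    congr 1
    rw [hk]; push_cast
    linear_combination -(q₁ * q₃ : ℝ) * hx
  · rw [← AddCircle.coe_add_intCast (r₂ * α₂) ((p₁ * ℓ + q₁ * p₂ * n) * p₃)]
    congr 1
    rw [hm'R, hm, hα₂eq]; push_cast; field_simp

theorem stmt11_general (θ α₁ α₂ : ℝ) (hθ : 0 < θ)
    (hirr : Irrational α₁)
    (p₁ p₂ p₃ : ℤ) (q₁ q₂ q₃ : ℕ) (hq₁ : 0 < q₁) (hq₂ : 0 < q₂) (hq₃ : 0 < q₃)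
    (hθeq : θ = (p₁ : ℝ) / (q₁ : ℝ) * α₁ + (p₂ : ℝ) / (q₂ : ℝ))
    (hα₂eq : α₂ = (p₃ : ℝ) / (q₃ : ℝ)) :
    ∀ (s : ℝ) (r₂ : ℕ),
      ((r₂ : ℝ) - (p₁ : ℝ) / (q₁ : ℝ) * s,
        ((s : ℝ) : AddCircle (1 : ℝ)),
        (((r₂ : ℝ) * α₂ : ℝ) : AddCircle (1 : ℝ))) ∈ closure (Sset θ α₁ α₂) := by
  intro s r₂
  set t := s / (q₁ * q₃)
  set F : ℝ → ℝ × AddCircle (1 : ℝ) × AddCircle (1 : ℝ) := fun x =>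
    ((r₂ : ℝ) - p₁ * q₃ * x, ((q₁ * q₃ * x : ℝ) : AddCircle (1 : ℝ)),
      ((r₂ * α₂ : ℝ) : AddCircle (1 : ℝ)))
  have hFt : F t = ((r₂ : ℝ) - p₁ / q₁ * s, (s : AddCircle (1 : ℝ)),
      ((r₂ * α₂ : ℝ) : AddCircle (1 : ℝ))) := by
    simp only [F, t, Prod.mk.injEq]
    refine ⟨by field_simp, by rw [mul_div_cancel₀ s (by positivity)], trivial⟩
  obtain ⟨M, hM⟩ := exists_nat_gt (|(p₁ : ℝ) * q₃| * (|t| + 1) / θ)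
  rw [div_lt_iff₀ hθ] at hM
  rw [← hFt]
  refine map_mem_closure (by fun_prop)
    ((hirr.natCast_mul hq₂.ne').dense_setOf_coe_eq_nsmul_of_ge M |>.open_subset_closure_inter
      isOpen_ball (mem_ball_self one_pos)) ?_
  rintro x ⟨hxt, n, hnM, hnx⟩
  obtain ⟨ℓ, hℓ⟩ := AddCircle.exists_eq_add_intCast_of_coe_eq (a := n * (q₂ * α₁)) (b := x)
    (by rwa [← nsmul_eq_mul, AddCircle.coe_nsmul])
  refine mem_Sset_of_eq_add_intCast hθ.le hq₁ hq₂ hq₃ hθeq hα₂eq r₂ n x ℓ hℓ ?_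
  have hx : |x| ≤ |t| + 1 := by
    have := abs_sub_abs_le_abs_sub x t
    rw [mem_ball, Real.dist_eq] at hxt
    linarith
  calc |(p₁ : ℝ) * q₃ * x| = |(p₁ : ℝ) * q₃| * |x| := abs_mul _ _
    _ ≤ |(p₁ : ℝ) * q₃| * (|t| + 1) := by gcongr
    _ ≤ M * θ := hM.le
    _ ≤ n * θ := by gcongr

/-- Suppose `α₁` is irrational, `θ = (p₁/q₁)·α₁ + p₂/q₂`, and `α₂ = p₃/q₃`. Then for every
`s ∈ ℝ` and every `r₂ ∈ ℕ`, the point `(r₂ − (p₁/q₁)·s, s mod 1, r₂·α₂ mod 1)` lies in the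
closure of `S`. -/
theorem stmt11 (θ α₁ α₂ : ℝ) (hθ : 0 < θ)
    (hα₁ : α₁ ∈ Set.Ioo (0 : ℝ) (1 / 2)) (hα₂ : α₂ ∈ Set.Ioo (0 : ℝ) (1 / 2))
    (hirr : Irrational α₁)
    (p₁ p₂ p₃ : ℤ) (q₁ q₂ q₃ : ℕ) (hq₁ : 0 < q₁) (hq₂ : 0 < q₂) (hq₃ : 0 < q₃)
    (hθeq : θ = (p₁ : ℝ) / (q₁ : ℝ) * α₁ + (p₂ : ℝ) / (q₂ : ℝ))
    (hα₂eq : α₂ = (p₃ : ℝ) / (q₃ : ℝ)) :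
    ∀ (s : ℝ) (r₂ : ℕ),
      ((r₂ : ℝ) - (p₁ : ℝ) / (q₁ : ℝ) * s,
        ((s : ℝ) : AddCircle (1 : ℝ)),
        (((r₂ : ℝ) * α₂ : ℝ) : AddCircle (1 : ℝ))) ∈ closure (Sset θ α₁ α₂) :=
  stmt11_general θ α₁ α₂ hθ hirr p₁ p₂ p₃ q₁ q₂ q₃ hq₁ hq₂ hq₃ hθeq hα₂eq
end

section
/- Suppose α₁ and α₂ are irrational, 1, θ, α₁ are linearly independent over ℚ, and θ·α₂ = (p₁/q₁)·θ + (p₂/q₂)·α₁ + p₃/q₃ for integers p₁, p₂, p₃ and positive integers q₁, q₂, q₃. Then for every (t, s) ∈ ℝ², the point (t, s mod 1, ((α₂ − p₁/q₁)·t + (p₂/q₂)·s) mod 1) lies in the closure of S. -/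
open Filter Topology Set

/-!
Scaling `θ` and `α₁` by integers reduces the theorem to simultaneous inhomogeneous approximation
for `A = q₂q₃θ` and `B = q₁q₃α₁`: with `k = q₁q₂q₃n` and `m = q₁m'`, the relation between `θα₂`,
`θ` and `α₁` makes `mα₂` congruent mod 1 to the target plus a fixed linear function of the errors
in the first two coordinates, so it suffices to approximate `(-t/q₁, s/q₂)` by `(nA - m', nB + q)`
with `n, m' ∈ ℕ` and `q ∈ ℤ`.

This is Kronecker's theorem on the torus: when no nontrivial integer combination of `a` and `b`
is an integer, the multiples of `(a, b)` are dense in `(ℝ/ℤ)²`. The preimage `G ⊆ ℝ²` of their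
closure is a closed subgroup containing `ℤ²` and `(a, b)`. Compactness of the torus gives nonzero
elements of `G` arbitrarily close to `0`, and the limit of their directions spans a line `ℝv ⊆ G`.
The image of `G` under a functional with kernel `ℝv` is a subgroup of `ℝ`; were it cyclic, `ℤc`,
the images of `(1, 0)`, `(0, 1)`, `(a, b)` would give an integer relation, so it is dense, and
then `G = ℝ²`. In a compact group the ℕ-multiples have the same closure as the ℤ-multiples,
which yields approximations with `n` as large as we like, hence `m' ≥ 0`.
-/

theorem UnitAddCircle.coe_add_intCast (x : ℝ) (z : ℤ) : ((x + z : ℝ) : UnitAddCircle) = x :=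
  QuotientAddGroup.mk_add_of_mem _ (AddSubgroup.intCast_mem_zmultiples_one z)

theorem UnitAddCircle.exists_int_abs_add_sub_lt {x y ε : ℝ}
    (h : dist (x : UnitAddCircle) y < ε) : ∃ p : ℤ, |x + p - y| < ε := by
  rw [dist_eq_norm, ← AddCircle.coe_sub, UnitAddCircle.norm_eq] at h
  exact ⟨-round (x - y), by rwa [Int.cast_neg, ← sub_eq_add_neg, sub_right_comm]⟩

theorem UnitAddCircle.exists_nat_ge_approx_of_mem_topologicalClosure {a b x y : ℝ}
    (h : ((x : UnitAddCircle), (y : UnitAddCircle)) ∈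
      (AddSubgroup.zmultiples ((a : UnitAddCircle), (b : UnitAddCircle))).topologicalClosure)
    (N : ℕ) {ε : ℝ} (hε : 0 < ε) :
    ∃ n : ℕ, N ≤ n ∧ ∃ p q : ℤ, |n * a + p - x| < ε ∧ |n * b + q - y| < ε := by
  rw [← mapClusterPt_atTop_nsmul_iff_mem_topologicalClosure_zmultiples] at h
  obtain ⟨n, hdist, hn⟩ :=
    ((h.frequently (Metric.ball_mem_nhds _ hε)).and_eventually (eventually_ge_atTop N)).exists
  rw [Prod.dist_eq, max_lt_iff] at hdist
  simp only [Prod.smul_mk, ← AddCircle.coe_nsmul, nsmul_eq_mul] at hdist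
  obtain ⟨p, hp⟩ := UnitAddCircle.exists_int_abs_add_sub_lt hdist.1
  obtain ⟨q, hq⟩ := UnitAddCircle.exists_int_abs_add_sub_lt hdist.2
  exact ⟨n, hn, p, q, hp, hq⟩

theorem tendsto_floor_div_mul {r : ℕ → ℝ} (hr : Tendsto r atTop (𝓝 0)) (hpos : ∀ j, 0 < r j)
    (t : ℝ) : Tendsto (fun j => (⌊t / r j⌋ : ℝ) * r j) atTop (𝓝 t) := by
  refine tendsto_of_tendsto_of_tendsto_of_le_of_le (by simpa using tendsto_const_nhds.sub hr)
    tendsto_const_nhds (fun j => ?_) (fun j => ?_)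
  · have := (div_lt_iff₀ (hpos j)).1 (Int.lt_floor_add_one (t / r j))
    dsimp only
    linarith
  · exact (le_div_iff₀ (hpos j)).1 (Int.floor_le _)

theorem AddSubgroup.exists_ne_zero_forall_smul_mem {E : Type*} [NormedAddCommGroup E]
    [NormedSpace ℝ E] [ProperSpace E] {G : AddSubgroup E} (hG : IsClosed (G : Set E))
    (hsmall : ∀ ε > 0, ∃ g ∈ G, g ≠ 0 ∧ ‖g‖ < ε) : ∃ v ≠ 0, ∀ t : ℝ, t • v ∈ G := by
  choose g hgG hg0 hgε using fun j : ℕ => hsmall (1 / (j + 1)) (by positivity)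
  have hnorm : Tendsto (fun j => ‖g j‖) atTop (𝓝 0) := squeeze_zero (fun _ => norm_nonneg _)
    (fun j => (hgε j).le) tendsto_one_div_add_atTop_nhds_zero_nat
  obtain ⟨v, hv, φ, hφ, hlim⟩ := (isCompact_sphere (0 : E) 1).tendsto_subseq
    (x := fun j => ‖g j‖⁻¹ • g j) (fun j => by simp [norm_smul, hg0 j])
  refine ⟨v, by rintro rfl; simp at hv, fun t => hG.mem_of_tendsto
    ((tendsto_floor_div_mul (hnorm.comp hφ.tendsto_atTop) (fun j => norm_pos_iff.2 (hg0 _)) t).smul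
      hlim) (Eventually.of_forall fun j => ?_)⟩
  -- the approximants are the integer multiples `⌊t / ‖g⌋ • g` of `g = g (φ j)`
  have hg : ‖g (φ j)‖ ≠ 0 := norm_ne_zero_iff.2 (hg0 _)
  simpa [smul_smul, mul_assoc, hg, Int.cast_smul_eq_zsmul] using
    G.zsmul_mem (hgG (φ j)) ⌊t / ‖g (φ j)‖⌋

theorem AddSubgroup.eq_top_of_ker_subset_of_dense_image {E : Type*} [AddCommGroup E]
    [Module ℝ E] [TopologicalSpace E] [IsTopologicalAddGroup E] [ContinuousSMul ℝ E]
    {G : AddSubgroup E} (hG : IsClosed (G : Set E)) {φ : E →L[ℝ] ℝ} (hφ : φ ≠ 0)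
    (hker : ∀ w, φ w = 0 → w ∈ G) (hdense : Dense (φ '' G)) : G = ⊤ := by
  obtain ⟨u, hu⟩ : ∃ u, φ u = 1 := by
    obtain ⟨u, hu⟩ : ∃ u, φ u ≠ 0 := by
      by_contra! h
      exact hφ (ContinuousLinearMap.ext h)
    exact ⟨(φ u)⁻¹ • u, by simp [hu]⟩
  refine eq_top_iff.2 fun w _ => ?_
  have hmaps : MapsTo (fun x : ℝ => w - (φ w - x) • u) (φ '' G) G := by
    rintro _ ⟨g, hg, rfl⟩
    have : w - (φ w - φ g) • u - g ∈ G := hker _ (by simp [hu])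
    simpa using G.add_mem this hg
  simpa [hG.closure_eq] using map_mem_closure (by fun_prop) (hdense (φ w)) hmaps

theorem Prod.exists_smul_eq_of_mul_sub_mul_eq_zero_s13 {v w : ℝ × ℝ} (hv : v ≠ 0)
    (h : v.2 * w.1 - v.1 * w.2 = 0) : ∃ t : ℝ, t • v = w := by
  by_cases h1 : v.1 = 0
  · have h2 : v.2 ≠ 0 := fun h2 => hv (Prod.ext h1 h2)
    refine ⟨w.2 / v.2, Prod.ext ?_ ?_⟩
    · simp only [Prod.smul_fst, smul_eq_mul, h1, mul_zero]
      rw [h1, zero_mul, sub_zero] at h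
      exact ((mul_eq_zero.1 h).resolve_left h2).symm
    · simp [h2]
  · refine ⟨w.1 / v.1, Prod.ext (by simp [h1]) ?_⟩
    simp only [Prod.smul_snd, smul_eq_mul]
    field_simp
    linarith

theorem AddSubgroup.dense_image_prod_of_ne_zero {a b : ℝ}
    (hrel : ∀ i j k : ℤ, (i : ℝ) * a + j * b = k → i = 0 ∧ j = 0) {G : AddSubgroup (ℝ × ℝ)}
    (h10 : ((1 : ℝ), (0 : ℝ)) ∈ G) (h01 : ((0 : ℝ), (1 : ℝ)) ∈ G) (hab : (a, b) ∈ G)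
    {f : ℝ × ℝ →L[ℝ] ℝ} (hf : f ≠ 0) : Dense (f '' G) := by
  have hcoord : ∀ w : ℝ × ℝ, f w = w.1 * f (1, 0) + w.2 * f (0, 1) := fun w => by
    rw [← smul_eq_mul, ← smul_eq_mul, ← map_smul, ← map_smul, ← map_add]
    congr 1
    ext <;> simp
  rcases (G.map (f : ℝ × ℝ →+ ℝ)).dense_or_cyclic with hd | ⟨c, hcyc⟩
  · simpa using hd
  have hmul : ∀ w ∈ G, ∃ n : ℤ, f w = n * c := fun w hw => by
    have : f w ∈ G.map (f : ℝ × ℝ →+ ℝ) := ⟨w, hw, rfl⟩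
    rw [hcyc, AddSubgroup.mem_closure_singleton] at this
    obtain ⟨n, hn⟩ := this
    exact ⟨n, by rw [← hn, zsmul_eq_mul]⟩
  obtain ⟨i, hi⟩ := hmul _ h10
  obtain ⟨j, hj⟩ := hmul _ h01
  obtain ⟨k, hk⟩ := hmul _ hab
  have hbasis : f (1, 0) ≠ 0 ∨ f (0, 1) ≠ 0 := by
    by_contra! h
    exact hf (ContinuousLinearMap.ext fun w => by simp [hcoord w, h.1, h.2])
  have hc : c ≠ 0 := by
    rintro rfl
    simp [hi, hj] at hbasis
  rw [hcoord, hi, hj] at hk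
  obtain ⟨rfl, rfl⟩ := hrel i j k (mul_right_cancel₀ hc (by simp only [← hk]; ring))
  simp [hi, hj] at hbasis

theorem UnitAddCircle.dense_zmultiples_prod {a b : ℝ}
    (hrel : ∀ i j k : ℤ, (i : ℝ) * a + j * b = k → i = 0 ∧ j = 0) :
    Dense (AddSubgroup.zmultiples ((a : UnitAddCircle), (b : UnitAddCircle)) :
      Set (UnitAddCircle × UnitAddCircle)) := by
  set H := AddSubgroup.zmultiples ((a : UnitAddCircle), (b : UnitAddCircle))
  let π : ℝ × ℝ →+ UnitAddCircle × UnitAddCircle :=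
    (QuotientAddGroup.mk' _).prodMap (QuotientAddGroup.mk' _)
  have hπ : Continuous π := (AddCircle.continuous_mk' 1).prodMap (AddCircle.continuous_mk' 1)
  set G := H.topologicalClosure.comap π
  have hG : IsClosed (G : Set (ℝ × ℝ)) := H.isClosed_topologicalClosure.preimage hπ
  have hmem : ∀ n : ℤ, ∀ w : ℝ × ℝ, π w = n • ((a : UnitAddCircle), (b : UnitAddCircle)) →
      w ∈ G := fun n w hw =>
    AddSubgroup.le_topologicalClosure _ (hw ▸ AddSubgroup.zsmul_mem_zmultiples _ n)
  have hsmall : ∀ ε > 0, ∃ g ∈ G, g ≠ 0 ∧ ‖g‖ < ε := by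
    intro ε hε
    obtain ⟨n, hn, p, q, hp, hq⟩ := UnitAddCircle.exists_nat_ge_approx_of_mem_topologicalClosure
      (a := a) (b := b) (x := 0) (y := 0) (by
        rw [QuotientAddGroup.mk_zero]; exact H.topologicalClosure.zero_mem) 1 hε
    refine ⟨(n * a + p, n * b + q), hmem n _ ?_, fun h => ?_, ?_⟩
    · ext <;> simp [π]
    · have := (hrel n 0 (-p) (by simpa [add_eq_zero_iff_eq_neg] using congr_arg Prod.fst h)).1
      omega
    · simpa [Prod.norm_def] using ⟨by simpa using hp, by simpa using hq⟩
  obtain ⟨v, hv, hline⟩ := AddSubgroup.exists_ne_zero_forall_smul_mem hG hsmall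
  let φ : ℝ × ℝ →L[ℝ] ℝ :=
    v.2 • ContinuousLinearMap.fst ℝ ℝ ℝ - v.1 • ContinuousLinearMap.snd ℝ ℝ ℝ
  have hφ : φ ≠ 0 := fun h => hv (Prod.ext (by simpa [φ] using congr_arg (· (0, 1)) h)
    (by simpa [φ] using congr_arg (· (1, 0)) h))
  have hGtop : G = ⊤ := AddSubgroup.eq_top_of_ker_subset_of_dense_image hG hφ
    (fun w hw => by
      obtain ⟨t, rfl⟩ := Prod.exists_smul_eq_of_mul_sub_mul_eq_zero_s13 hv (by simpa [φ] using hw)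
      exact hline t)
    (AddSubgroup.dense_image_prod_of_ne_zero hrel (hmem 0 _ (by ext <;> simp [π]))
      (hmem 0 _ (by ext <;> simp [π])) (hmem 1 _ (by ext <;> simp [π])) hφ)
  rw [dense_iff_closure_eq, ← AddSubgroup.topologicalClosure_coe, eq_univ_iff_forall]
  intro y
  obtain ⟨w, rfl⟩ := (QuotientAddGroup.mk_surjective.prodMap QuotientAddGroup.mk_surjective) y
  exact (hGtop ▸ AddSubgroup.mem_top w : w ∈ G)

theorem mem_closure_natMul_sub_natCast_natMul_add_intCast {a b : ℝ} (ha : 0 < a)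
    (hrel : ∀ i j k : ℤ, (i : ℝ) * a + j * b = k → i = 0 ∧ j = 0) (x y : ℝ) :
    (x, y) ∈ closure {e : ℝ × ℝ | ∃ n m : ℕ, ∃ q : ℤ, e = (n * a - m, n * b + q)} := by
  refine Metric.mem_closure_iff.2 fun ε hε => ?_
  obtain ⟨N, hN⟩ := exists_nat_gt ((x + ε) / a)
  obtain ⟨n, hNn, p, q, hp, hq⟩ := UnitAddCircle.exists_nat_ge_approx_of_mem_topologicalClosure
    (by rw [← SetLike.mem_coe, AddSubgroup.topologicalClosure_coe]
        exact UnitAddCircle.dense_zmultiples_prod hrel _) N hε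
  have hpos : 0 ≤ -p := by
    have : (x + ε) < n * a := by
      rw [div_lt_iff₀ ha] at hN
      nlinarith [(Nat.cast_le (α := ℝ)).2 hNn]
    have : (p : ℝ) < 0 := by linarith [(abs_lt.1 hp).2]
    have : p < 0 := by exact_mod_cast this
    omega
  obtain ⟨m, hm⟩ := Int.eq_ofNat_of_zero_le hpos
  refine ⟨(n * a - m, n * b + q), ⟨n, m, q, rfl⟩, ?_⟩
  have hm' : (m : ℝ) = -p := by exact_mod_cast hm.symm
  rw [Prod.dist_eq, max_lt_iff, Real.dist_eq, Real.dist_eq, abs_sub_comm, abs_sub_comm y, hm']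
  exact ⟨by simpa [sub_neg_eq_add] using hp, hq⟩

theorem LinearIndependent.eq_zero_of_intCast_mul_add_eq {x y : ℝ}
    (h : LinearIndependent ℚ ![1, x, y]) {i j k : ℤ} (hrel : (i : ℝ) * x + j * y = k) :
    i = 0 ∧ j = 0 := by
  have := Fintype.linearIndependent_iff.1 h ![(-k : ℚ), i, j]
    (by simp [Fin.sum_univ_three, Rat.smul_def]; linarith)
  exact ⟨by simpa using this 1, by simpa using this 2⟩

theorem mapsTo_Sset {θ α₁ α₂ : ℝ} {p₁ p₂ p₃ : ℤ} {q₁ q₂ q₃ : ℕ} (hq₁ : q₁ ≠ 0) (hq₂ : q₂ ≠ 0)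
    (hq₃ : q₃ ≠ 0) (heq : θ * α₂ = p₁ / q₁ * θ + p₂ / q₂ * α₁ + p₃ / q₃) :
    MapsTo (fun e : ℝ × ℝ => (-(q₁ * e.1), ((q₂ * e.2 : ℝ) : UnitAddCircle),
        (((q₁ * α₂ - p₁) * -e.1 + p₂ * e.2 : ℝ) : UnitAddCircle)))
      {e | ∃ n m : ℕ, ∃ q : ℤ, e = (n * (q₂ * q₃ * θ) - m, n * (q₁ * q₃ * α₁) + q)}
      (Sset θ α₁ α₂) := by
  rintro _ ⟨n, m, q, rfl⟩
  refine ⟨q₁ * q₂ * q₃ * n, q₁ * m, Prod.ext ?_ (Prod.ext ?_ ?_)⟩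
  · push_cast; ring
  · have : (q₂ : ℝ) * (n * (q₁ * q₃ * α₁) + q)
        = ((q₁ * q₂ * q₃ * n : ℕ) : ℝ) * α₁ + ((q₂ * q : ℤ) : ℝ) := by push_cast; ring
    simp only [this, UnitAddCircle.coe_add_intCast]
  · have : (q₁ * α₂ - p₁) * -(n * (q₂ * q₃ * θ) - m) + p₂ * (n * (q₁ * q₃ * α₁) + q)
        = ((q₁ * m : ℕ) : ℝ) * α₂ + ((p₂ * q - p₁ * m - q₁ * q₂ * n * p₃ : ℤ) : ℝ) := by
      field_simp at heq
      push_cast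
      linear_combination (-(n : ℝ)) * heq
    simp only [this, UnitAddCircle.coe_add_intCast]

theorem stmt13_general (θ α₁ α₂ : ℝ) (hθ : 0 < θ)
    (hli : LinearIndependent ℚ ![(1 : ℝ), θ, α₁])
    (p₁ p₂ p₃ : ℤ) (q₁ q₂ q₃ : ℕ) (hq₁ : 0 < q₁) (hq₂ : 0 < q₂) (hq₃ : 0 < q₃)
    (heq : θ * α₂ = (p₁ : ℝ) / (q₁ : ℝ) * θ + (p₂ : ℝ) / (q₂ : ℝ) * α₁ +
      (p₃ : ℝ) / (q₃ : ℝ)) :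
    ∀ t s : ℝ,
      (t, ((s : ℝ) : AddCircle (1 : ℝ)),
        ((((α₂ - (p₁ : ℝ) / (q₁ : ℝ)) * t + (p₂ : ℝ) / (q₂ : ℝ) * s : ℝ)) :
          AddCircle (1 : ℝ))) ∈ closure (Sset θ α₁ α₂) := by
  intro t s
  have hrel : ∀ i j k : ℤ, (i : ℝ) * (q₂ * q₃ * θ) + j * (q₁ * q₃ * α₁) = k → i = 0 ∧ j = 0 :=
    fun i j k h => by
      simpa [hq₁.ne', hq₂.ne', hq₃.ne'] using hli.eq_zero_of_intCast_mul_add_eq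
        (i := i * q₂ * q₃) (j := j * q₁ * q₃) (k := k) (by push_cast; linear_combination h)
  convert map_mem_closure (by fun_prop)
    (mem_closure_natMul_sub_natCast_natMul_add_intCast (by positivity) hrel (-t / q₁) (s / q₂))
    (mapsTo_Sset hq₁.ne' hq₂.ne' hq₃.ne' heq) using 1
  have : (q₁ : ℝ) ≠ 0 := by positivity
  have : (q₂ : ℝ) ≠ 0 := by positivity
  congr 3 <;> field_simp

/-- Suppose `α₁` and `α₂` are irrational, `1, θ, α₁` are linearly independent over `ℚ`,
and `θ·α₂ = (p₁/q₁)·θ + (p₂/q₂)·α₁ + p₃/q₃`. Then for every `(t, s) ∈ ℝ²`, the point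
`(t, s mod 1, ((α₂ − p₁/q₁)·t + (p₂/q₂)·s) mod 1)` lies in the closure of `S`. -/
theorem stmt13 (θ α₁ α₂ : ℝ) (hθ : 0 < θ)
    (hα₁ : α₁ ∈ Set.Ioo (0 : ℝ) (1 / 2)) (hα₂ : α₂ ∈ Set.Ioo (0 : ℝ) (1 / 2))
    (hirr1 : Irrational α₁) (hirr2 : Irrational α₂)
    (hli : LinearIndependent ℚ ![(1 : ℝ), θ, α₁])
    (p₁ p₂ p₃ : ℤ) (q₁ q₂ q₃ : ℕ) (hq₁ : 0 < q₁) (hq₂ : 0 < q₂) (hq₃ : 0 < q₃)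
    (heq : θ * α₂ = (p₁ : ℝ) / (q₁ : ℝ) * θ + (p₂ : ℝ) / (q₂ : ℝ) * α₁ +
      (p₃ : ℝ) / (q₃ : ℝ)) :
    ∀ t s : ℝ,
      (t, ((s : ℝ) : AddCircle (1 : ℝ)),
        ((((α₂ - (p₁ : ℝ) / (q₁ : ℝ)) * t + (p₂ : ℝ) / (q₂ : ℝ) * s : ℝ)) :
          AddCircle (1 : ℝ))) ∈ closure (Sset θ α₁ α₂) :=
  stmt13_general θ α₁ α₂ hθ hli p₁ p₂ p₃ q₁ q₂ q₃ hq₁ hq₂ hq₃ heq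
end

section
/- Suppose α₁ and α₂ are irrational, θ = (p₁/q₁)·α₁ + p₂/q₂ and θ·α₂ = (p₃/q₃)·α₁ + p₄/q₄ for integers p₁, p₂, p₃, p₄ and positive integers q₁, q₂, q₃, q₄. Then for every s ∈ ℝ, the point (−(p₁/q₁)·s, s mod 1, ((p₃/q₃) − α₂·(p₁/q₁))·s mod 1) lies in the closure of S. -/
/-!
Put `k = q₂q₄·n` and let `t = k·α₁ − J·q₁q₃` with `J ∈ ℤ`. The two rational relations make
`m = k·θ − (p₁/q₁)·t` an integer and `m·α₂ ≡ (p₃/q₃ − α₂·p₁/q₁)·t (mod 1)`, so the point of `S`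
with indices `(k, m)` is the point with parameter `t` on the helix
`t ↦ (−(p₁/q₁)·t, t, (p₃/q₃ − α₂·p₁/q₁)·t)`, provided `m ≥ 0`, which holds once `n` is large
since `θ > 0`. As `q₂q₄·α₁/(q₁q₃)` is irrational, every tail of the forward orbit of the
corresponding rotation is dense, so such parameters `t` accumulate at every `s`.
-/

open Filter

theorem AddCircle.mapClusterPt_atTop_nsmul_of_irrational {p a : ℝ} [Fact (0 < p)]
    (ha : Irrational (a / p)) (x : AddCircle p) :
    MapClusterPt x atTop (· • (a : AddCircle p) : ℕ → AddCircle p) :=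
  ((mapClusterPt_atTop_nsmul_tfae x _).out 0 3).2 (AddCircle.denseRange_zsmul_coe_iff.2 ha x)

theorem AddCircle.dense_coe_preimage_nsmul_Ici {p a : ℝ} [Fact (0 < p)]
    (ha : Irrational (a / p)) (N : ℕ) :
    Dense (((↑) : ℝ → AddCircle p) ⁻¹' ((· • (a : AddCircle p)) '' Set.Ici N)) :=
  Dense.preimage (fun x => (mapClusterPt_atTop_nsmul_of_irrational ha x).mem_closure_of_mem _
    (image_mem_map (Ici_mem_atTop N))) QuotientAddGroup.isOpenMap_coe

def helix (a c α₂ t : ℝ) : ℝ × AddCircle (1 : ℝ) × AddCircle (1 : ℝ) :=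
  (-a * t, (t : AddCircle (1 : ℝ)), (((c - α₂ * a) * t : ℝ) : AddCircle (1 : ℝ)))

theorem continuous_helix (a c α₂ : ℝ) : Continuous (helix a c α₂) := by
  unfold helix
  fun_prop

theorem AddCircle.coe_eq_coe_of_sub_eq_intCast {x y : ℝ} {z : ℤ} (h : x - y = z) :
    (x : AddCircle (1 : ℝ)) = y := by
  rw [QuotientAddGroup.eq, AddSubgroup.mem_zmultiples_iff]
  exact ⟨-z, by rw [zsmul_one]; push_cast; linarith⟩

theorem helix_mem_Sset {θ α₁ α₂ a c d t : ℝ} (hθα₂ : θ * α₂ = c * α₁ + d) {k m : ℕ}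
    (hm : (m : ℝ) = k * θ - a * t) {J : ℤ} (hJ : k * α₁ - t = J) {z : ℤ}
    (hz : k * d + c * J = z) : helix a c α₂ t ∈ Sset θ α₁ α₂ := by
  refine ⟨k, m, Prod.ext (by simp [helix, hm]) (Prod.ext ?_ ?_)⟩
  · exact (AddCircle.coe_eq_coe_of_sub_eq_intCast hJ).symm
  · refine AddCircle.coe_eq_coe_of_sub_eq_intCast (z := -z) ?_
    push_cast
    linear_combination (-1 : ℝ) * hz - c * hJ - k * hθα₂ - α₂ * hm

theorem helix_mem_Sset_of_coe_eq_nsmul {θ α₁ α₂ : ℝ} {p₁ p₂ p₃ p₄ : ℤ} {q₁ q₂ q₃ q₄ : ℕ}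
    (hq₁ : q₁ ≠ 0) (hq₂ : q₂ ≠ 0) (hq₃ : q₃ ≠ 0) (hq₄ : q₄ ≠ 0)
    (hθeq : θ = (p₁ : ℝ) / (q₁ : ℝ) * α₁ + (p₂ : ℝ) / (q₂ : ℝ))
    (heq : θ * α₂ = (p₃ : ℝ) / (q₃ : ℝ) * α₁ + (p₄ : ℝ) / (q₄ : ℝ)) {n : ℕ} {t : ℝ}
    (ht : (t : AddCircle ((q₁ * q₃ : ℕ) : ℝ)) = n • (((q₂ * q₄ : ℕ) * α₁ : ℝ) : AddCircle _))
    (hpos : (p₁ : ℝ) / q₁ * t ≤ (q₂ * q₄ * n : ℕ) * θ) :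
    helix (p₁ / q₁) (p₃ / q₃) α₂ t ∈ Sset θ α₁ α₂ := by
  obtain ⟨J, hJ⟩ : ∃ J : ℤ, J • ((q₁ * q₃ : ℕ) : ℝ) = n • ((q₂ * q₄ : ℕ) * α₁) - t := by
    rw [← AddCircle.coe_eq_zero_iff, AddCircle.coe_sub, AddCircle.coe_nsmul, ht, sub_self]
  obtain ⟨m, hm⟩ : ∃ m : ℕ, (m : ℝ) = (q₂ * q₄ * n : ℕ) * θ - p₁ / q₁ * t := by
    have hz : (((n * q₄ * p₂ + p₁ * J * q₃ : ℤ)) : ℝ) = (q₂ * q₄ * n : ℕ) * θ - p₁ / q₁ * t := by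
      simp only [zsmul_eq_mul, nsmul_eq_mul] at hJ
      rw [hθeq]
      push_cast at hJ ⊢
      field_simp
      linear_combination (p₁ : ℝ) * hJ
    have hz0 : 0 ≤ n * q₄ * p₂ + p₁ * J * q₃ := by exact_mod_cast hz ▸ sub_nonneg.2 hpos
    lift n * q₄ * p₂ + p₁ * J * q₃ to ℕ using hz0 with m
    exact ⟨m, by exact_mod_cast hz⟩
  refine helix_mem_Sset heq hm (J := J * (q₁ * q₃)) ?_ (z := n * q₂ * p₄ + p₃ * J * q₁) ?_
  · simp only [zsmul_eq_mul, nsmul_eq_mul] at hJ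
    push_cast at hJ ⊢
    linear_combination -hJ
  · push_cast
    field_simp

theorem stmt14_general (θ α₁ α₂ : ℝ) (hθ : 0 < θ)
    (hirr1 : Irrational α₁)
    (p₁ p₂ p₃ p₄ : ℤ) (q₁ q₂ q₃ q₄ : ℕ)
    (hq₁ : 0 < q₁) (hq₂ : 0 < q₂) (hq₃ : 0 < q₃) (hq₄ : 0 < q₄)
    (hθeq : θ = (p₁ : ℝ) / (q₁ : ℝ) * α₁ + (p₂ : ℝ) / (q₂ : ℝ))
    (heq : θ * α₂ = (p₃ : ℝ) / (q₃ : ℝ) * α₁ + (p₄ : ℝ) / (q₄ : ℝ)) :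
    ∀ s : ℝ,
      (-((p₁ : ℝ) / (q₁ : ℝ)) * s, ((s : ℝ) : AddCircle (1 : ℝ)),
        ((((p₃ : ℝ) / (q₃ : ℝ) - α₂ * ((p₁ : ℝ) / (q₁ : ℝ))) * s : ℝ) :
          AddCircle (1 : ℝ))) ∈ closure (Sset θ α₁ α₂) := by
  intro s
  have : Fact (0 < ((q₁ * q₃ : ℕ) : ℝ)) := ⟨by positivity⟩
  have hirr : Irrational (((q₂ * q₄ : ℕ) * α₁ : ℝ) / (q₁ * q₃ : ℕ)) :=
    (hirr1.natCast_mul (by positivity)).div_natCast (by positivity)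
  obtain ⟨N, hN⟩ := exists_nat_gt ((p₁ : ℝ) / q₁ * s / θ)
  set U := {t : ℝ | (p₁ : ℝ) / q₁ * t < N * θ}
  have hU : IsOpen U := isOpen_lt (by fun_prop) (by fun_prop)
  have hsU : s ∈ U := (div_lt_iff₀ hθ).1 hN
  have hsub : helix (p₁ / q₁) (p₃ / q₃) α₂ ''
      (U ∩ (↑) ⁻¹' ((· • (((q₂ * q₄ : ℕ) * α₁ : ℝ) : AddCircle ((q₁ * q₃ : ℕ) : ℝ))) ''
        Set.Ici N)) ⊆ Sset θ α₁ α₂ := by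
    rintro _ ⟨t, ⟨htU, n, hn, ht⟩, rfl⟩
    refine helix_mem_Sset_of_coe_eq_nsmul hq₁.ne' hq₂.ne' hq₃.ne' hq₄.ne' hθeq heq ht.symm
      (htU.le.trans ?_)
    gcongr
    exact hn.trans (Nat.le_mul_of_pos_left n (by positivity))
  exact closure_mono hsub <| mem_closure_image (continuous_helix _ _ _).continuousAt <|
    (AddCircle.dense_coe_preimage_nsmul_Ici hirr N).open_subset_closure_inter hU hsU

/-- Suppose `α₁` and `α₂` are irrational, `θ = (p₁/q₁)·α₁ + p₂/q₂` and
`θ·α₂ = (p₃/q₃)·α₁ + p₄/q₄`. Then for every `s ∈ ℝ`, the point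
`(−(p₁/q₁)·s, s mod 1, ((p₃/q₃) − α₂·(p₁/q₁))·s mod 1)` lies in the closure of `S`. -/
theorem stmt14 (θ α₁ α₂ : ℝ) (hθ : 0 < θ)
    (hα₁ : α₁ ∈ Set.Ioo (0 : ℝ) (1 / 2)) (hα₂ : α₂ ∈ Set.Ioo (0 : ℝ) (1 / 2))
    (hirr1 : Irrational α₁) (hirr2 : Irrational α₂)
    (p₁ p₂ p₃ p₄ : ℤ) (q₁ q₂ q₃ q₄ : ℕ)
    (hq₁ : 0 < q₁) (hq₂ : 0 < q₂) (hq₃ : 0 < q₃) (hq₄ : 0 < q₄)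
    (hθeq : θ = (p₁ : ℝ) / (q₁ : ℝ) * α₁ + (p₂ : ℝ) / (q₂ : ℝ))
    (heq : θ * α₂ = (p₃ : ℝ) / (q₃ : ℝ) * α₁ + (p₄ : ℝ) / (q₄ : ℝ)) :
    ∀ s : ℝ,
      (-((p₁ : ℝ) / (q₁ : ℝ)) * s, ((s : ℝ) : AddCircle (1 : ℝ)),
        ((((p₃ : ℝ) / (q₃ : ℝ) - α₂ * ((p₁ : ℝ) / (q₁ : ℝ))) * s : ℝ) :
          AddCircle (1 : ℝ))) ∈ closure (Sset θ α₁ α₂) :=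
  stmt14_general θ α₁ α₂ hθ hirr1 p₁ p₂ p₃ p₄ q₁ q₂ q₃ q₄ hq₁ hq₂ hq₃ hq₄ hθeq heq
end
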